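/- arXiv:math/0609782 — 7 statements merged into one kernel-verified Lean document; each statement's English description precedes it below -/
import Mathlib

section
/- Let A be a C*-algebra, let n be a positive natural number, and let x = (x_{j,k}) be a positive element of M_n(A). Then there exists an index k with ‖x_{k,k}‖ ≥ n^{-2} · ‖x‖. -/
/-!
Write `x = z⋆z` and let `cⱼ` be the `j`-th column of `z`, so that `z = ∑ⱼ cⱼ` and `cⱼ⋆cⱼ` is the
matrix with `xⱼⱼ` at `(j, j)` and zeros elsewhere. Putting `N` on a type synonym of `Mₙ(A)` makes
it a C⋆-algebra, and an injective ⋆-homomorphism between C⋆-algebras is isometric, so the corner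
embedding `a ↦ single j j a` preserves norms and `N(cⱼ)² = ‖xⱼⱼ‖`. Hence
`N(x) = N(z)² ≤ (∑ⱼ ‖xⱼⱼ‖^½)² ≤ n² maxⱼ ‖xⱼⱼ‖`.
-/

open Matrix

noncomputable section

structure CompleteCStarNorm (M : Type*) [NonUnitalRing M] [StarRing M] [Module ℂ M] where
  norm : M → ℝ
  norm_nonneg : ∀ a, 0 ≤ norm a
  norm_eq_zero_iff : ∀ a, norm a = 0 ↔ a = 0
  norm_add_le : ∀ a b, norm (a + b) ≤ norm a + norm b
  norm_smul : ∀ (c : ℂ) a, norm (c • a) = ‖c‖ * norm a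
  norm_mul_le : ∀ a b, norm (a * b) ≤ norm a * norm b
  norm_star_mul_self : ∀ a, norm (star a * a) = norm a * norm a
  complete : ∀ f : ℕ → M, (∀ ε : ℝ, 0 < ε → ∃ K, ∀ i ≥ K, ∀ j ≥ K, norm (f i - f j) < ε) →
      ∃ l, ∀ ε : ℝ, 0 < ε → ∃ K, ∀ i ≥ K, norm (f i - l) < ε

namespace CompleteCStarNorm

variable {M : Type*} [NonUnitalRing M] [StarRing M] [Module ℂ M]

def Space (_ν : CompleteCStarNorm M) : Type _ := M

variable (ν : CompleteCStarNorm M)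

instance : NonUnitalRing ν.Space := ‹NonUnitalRing M›
instance : StarRing ν.Space := ‹StarRing M›
instance : Module ℂ ν.Space := ‹Module ℂ M›

lemma norm_neg (a : M) : ν.norm (-a) = ν.norm a := by
  simpa using ν.norm_smul (-1) a

def toAddGroupNorm : AddGroupNorm ν.Space where
  toFun := ν.norm
  map_zero' := (ν.norm_eq_zero_iff 0).mpr rfl
  add_le' := ν.norm_add_le
  neg' := ν.norm_neg
  eq_zero_of_map_eq_zero' a := (ν.norm_eq_zero_iff a).mp

instance : NormedAddCommGroup ν.Space := ν.toAddGroupNorm.toNormedAddCommGroup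

instance : NonUnitalNormedRing ν.Space :=
  { ‹NonUnitalRing M›, (inferInstance : NormedAddCommGroup ν.Space) with
    norm_mul_le a b := by exact ν.norm_mul_le a b }

instance : CStarRing ν.Space where
  norm_mul_self_le a := (ν.norm_star_mul_self a).ge

instance : NormedSpace ℂ ν.Space where
  norm_smul_le c a := (ν.norm_smul c a).le

instance : CompleteSpace ν.Space := Metric.complete_of_cauchySeq_tendsto fun f hf => by
  obtain ⟨l, hl⟩ := ν.complete f fun ε hε => (Metric.cauchySeq_iff.mp hf ε hε).imp
    fun K hK i hi j hj => (dist_eq_norm (f i) (f j)).symm.trans_lt (hK i hi j hj)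
  exact ⟨l, Metric.tendsto_atTop.mpr fun ε hε => (hl ε hε).imp
    fun K hK i hi => (dist_eq_norm (f i) (show ν.Space from l)).trans_lt (hK i hi)⟩

variable [IsScalarTower ℂ M M] [SMulCommClass ℂ M M] [StarModule ℂ M]

instance : NonUnitalCStarAlgebra ν.Space where
  __ := ‹IsScalarTower ℂ M M›
  __ := ‹SMulCommClass ℂ M M›
  __ := ‹StarModule ℂ M›

end CompleteCStarNorm

namespace Matrix

variable {ι α : Type*} [Fintype ι] [DecidableEq ι]

def colPart [Zero α] (z : Matrix ι ι α) (j : ι) : Matrix ι ι α :=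
  of fun i l => if l = j then z i j else 0

lemma sum_colPart [AddCommMonoid α] (z : Matrix ι ι α) : ∑ j, z.colPart j = z := by
  ext i l
  simp [colPart, Matrix.sum_apply]

lemma star_colPart_mul_colPart [NonUnitalSemiring α] [StarRing α] (z : Matrix ι ι α) (j : ι) :
    star (z.colPart j) * z.colPart j = single j j ((star z * z) j j) := by
  ext k l
  simp only [colPart, mul_apply, star_apply, of_apply, single_apply]
  split_ifs <;> subst_vars <;> simp_all

def singleNonUnitalStarAlgHom (R : Type*) [Monoid R] [NonUnitalSemiring α] [StarRing α]
    [DistribMulAction R α] (k : ι) : α →⋆ₙₐ[R] Matrix ι ι α where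
  toFun := single k k
  map_add' := single_add k k
  map_zero' := single_zero k k
  map_mul' a b := (single_mul_single_same (c := a) k k k b).symm
  map_smul' c a := (smul_single c k k a).symm
  map_star' a := by simp [star_eq_conjTranspose]

end Matrix

namespace CompleteCStarNorm

variable {ι A : Type*} [Fintype ι] [DecidableEq ι] [NonUnitalCStarAlgebra A]
  (ν : CompleteCStarNorm (Matrix ι ι A))

lemma norm_single_diag (k : ι) (a : A) : ν.norm (single k k a) = ‖a‖ :=
  NonUnitalStarAlgHom.norm_map
    (show A →⋆ₙₐ[ℂ] ν.Space from singleNonUnitalStarAlgHom ℂ k)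
    (fun a b hab => by simpa using congrFun₂ (show single k k a = single k k b from hab) k k) a

lemma norm_colPart (z : Matrix ι ι A) (j : ι) :
    ν.norm (z.colPart j) = √‖(star z * z) j j‖ := by
  rw [← ν.norm_single_diag j, ← star_colPart_mul_colPart, ν.norm_star_mul_self,
    Real.sqrt_mul_self (ν.norm_nonneg _)]

lemma norm_le_sum_sqrt_diag (z : Matrix ι ι A) :
    ν.norm z ≤ ∑ j, √‖(star z * z) j j‖ := calc
  ν.norm z = ν.norm (∑ j, z.colPart j) := by rw [sum_colPart]
  _ ≤ ∑ j, ν.norm (z.colPart j) :=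
    Finset.le_sum_of_subadditive ν.norm ((ν.norm_eq_zero_iff 0).mpr rfl).le ν.norm_add_le _ _
  _ = ∑ j, √‖(star z * z) j j‖ := by simp only [ν.norm_colPart]

lemma norm_star_mul_self_le_card_sq_mul (z : Matrix ι ι A) (k : ι)
    (hk : ∀ j, ‖(star z * z) j j‖ ≤ ‖(star z * z) k k‖) :
    ν.norm (star z * z) ≤ (Fintype.card ι : ℝ) ^ 2 * ‖(star z * z) k k‖ := by
  have hsum : ∑ j, √‖(star z * z) j j‖ ≤ Fintype.card ι * √‖(star z * z) k k‖ :=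
    (Finset.sum_le_sum fun j _ => Real.sqrt_le_sqrt (hk j)).trans_eq <| by
      rw [Finset.sum_const, Finset.card_univ, nsmul_eq_mul]
  calc ν.norm (star z * z) = ν.norm z ^ 2 := by rw [ν.norm_star_mul_self, sq]
    _ ≤ (Fintype.card ι * √‖(star z * z) k k‖) ^ 2 :=
      pow_le_pow_left₀ (ν.norm_nonneg z) ((ν.norm_le_sum_sqrt_diag z).trans hsum) 2
    _ = (Fintype.card ι : ℝ) ^ 2 * ‖(star z * z) k k‖ := by
      rw [mul_pow, Real.sq_sqrt (_root_.norm_nonneg _)]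

end CompleteCStarNorm

/-- A positive `n × n` matrix over a C*-algebra has some diagonal entry of norm at
least `n⁻² ‖x‖`, where `‖x‖` is computed with respect to (the necessarily unique)
complete C*-norm `N` on the matrix algebra `Mₙ(A)`. -/
theorem exists_diag_norm_ge_of_posSemidef (A : Type*) [NonUnitalCStarAlgebra A]
    (n : ℕ) (hn : 0 < n) (N : Matrix (Fin n) (Fin n) A → ℝ)
    (hN_nonneg : ∀ a, 0 ≤ N a)
    (hN_zero : ∀ a, N a = 0 ↔ a = 0)
    (hN_add : ∀ a b, N (a + b) ≤ N a + N b)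
    (hN_smul : ∀ (c : ℂ) a, N (c • a) = ‖c‖ * N a)
    (hN_mul : ∀ a b, N (a * b) ≤ N a * N b)
    (hN_star : ∀ a, N (star a * a) = N a * N a)
    (hN_complete : ∀ f : ℕ → Matrix (Fin n) (Fin n) A,
      (∀ ε : ℝ, 0 < ε → ∃ K, ∀ i ≥ K, ∀ j ≥ K, N (f i - f j) < ε) →
      ∃ l, ∀ ε : ℝ, 0 < ε → ∃ K, ∀ i ≥ K, N (f i - l) < ε)
    (x : Matrix (Fin n) (Fin n) A)
    (hpos : ∃ z : Matrix (Fin n) (Fin n) A, x = star z * z) :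
    ∃ k : Fin n, ((n : ℝ) ^ 2)⁻¹ * N x ≤ ‖x k k‖ := by
  obtain ⟨z, rfl⟩ := hpos
  let ν : CompleteCStarNorm (Matrix (Fin n) (Fin n) A) :=
    ⟨N, hN_nonneg, hN_zero, hN_add, hN_smul, hN_mul, hN_star, hN_complete⟩
  have : Nonempty (Fin n) := ⟨⟨0, hn⟩⟩
  obtain ⟨k, -, hk⟩ :=
    Finset.univ.exists_max_image (fun k => ‖(star z * z) k k‖) Finset.univ_nonempty
  refine ⟨k, ?_⟩
  rw [inv_mul_le_iff₀ (by positivity)]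
  simpa using ν.norm_star_mul_self_le_card_sq_mul z k fun j => hk j (Finset.mem_univ j)
end
end

section
/- Let A be a C*-algebra and c ∈ A. For any projection p in the hereditary subalgebra closure(c A c*), there exists a projection q in closure(c* A c) such that p is Murray-von Neumann equivalent to q. -/
open Matrix
open scoped ComplexOrder

noncomputable section

/-- A projection in a `*`-algebra: a selfadjoint idempotent. -/
def IsProjectionElem {A : Type*} [Mul A] [Star A] (p : A) : Prop :=
  star p = p ∧ p * p = p

/-- Murray-von Neumann equivalence of projections. -/
def MvNEquiv {A : Type*} [Mul A] [Star A] (p q : A) : Prop :=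
  ∃ v : A, star v * v = p ∧ v * star v = q

/-- `p` is Murray-von Neumann equivalent to a subprojection of `q`. -/
def MvNSubEquiv {A : Type*} [Mul A] [Star A] (p q : A) : Prop :=
  ∃ v : A, star v * v = p ∧ q * (v * star v) = v * star v

/-- The hereditary subalgebra generated by `x`: the closure of `x A x`. -/
def herSub {A : Type*} [Mul A] [TopologicalSpace A] (x : A) : Set A :=
  closure {y : A | ∃ a : A, y = x * a * x}

/-- `p` is Murray-von Neumann equivalent to a projection in the hereditary
subalgebra generated by `x`. -/
def MvNInHer {A : Type*} [Mul A] [Star A] [TopologicalSpace A] (p x : A) : Prop :=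
  ∃ q : A, IsProjectionElem q ∧ q ∈ herSub x ∧ MvNEquiv p q

/-!
Approximate `p` within distance `1` by some `c a c*`. Then `p c a c*` is invertible in the corner
`pAp`, which forces `ε p ≤ p c c* p` for some `ε > 0`. In the unitization,
`u = p c c* p + ε (1 - p)` is invertible and commutes with `p`, so `s = u^(-1/2) p` satisfies
`s c c* s = p`. Hence `v = c* s` has `v* v = p`, and `v v* = c* s² c` lies in `c* A c`.
-/

theorem isProjectionElem_iff_isStarProjection {R : Type*} [Mul R] [Star R] {p : R} :
    IsProjectionElem p ↔ IsStarProjection p :=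
  ⟨fun ⟨hs, hi⟩ => ⟨hi, hs⟩, fun ⟨hi, hs⟩ => ⟨hs, hi⟩⟩

theorem IsStarProjection.mul_star_self_of_star_mul_self {R : Type*} [NonUnitalNormedRing R]
    [StarRing R] [CStarRing R] {v : R} (h : IsStarProjection (star v * v)) :
    IsStarProjection (v * star v) := by
  have hv : v * (star v * v) = v := by
    have h0 : star (v - v * (star v * v)) * (v - v * (star v * v)) = 0 := by
      have hi := h.isIdempotentElem.eq
      simp only [star_sub, star_mul, star_star, sub_mul, mul_sub]
      simp only [← mul_assoc] at hi ⊢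
      simp only [hi, sub_self]
    exact (sub_eq_zero.mp ((CStarRing.star_mul_self_eq_zero_iff _).mp h0)).symm
  refine ⟨?_, .mul_star_self v⟩
  rw [IsIdempotentElem, ← mul_assoc, mul_assoc v, hv]

namespace IsStarProjection

section Unital

variable {B : Type*} [CStarAlgebra B] [PartialOrder B] [StarOrderedRing B] {p : B}

theorem le_smul_mul_star_of_norm_sub_lt_one (hp : IsStarProjection p) {y : B}
    (hy : ‖p - y‖ < 1) : ∃ γ : ℝ, 0 ≤ γ ∧ p ≤ γ • (p * y * star (p * y)) := by
  have hpy : ‖p - p * y‖ < 1 := by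
    calc ‖p - p * y‖ = ‖p * (p - y)‖ := by rw [mul_sub, hp.isIdempotentElem.eq]
      _ ≤ ‖p‖ * ‖p - y‖ := norm_mul_le _ _
      _ ≤ ‖p - y‖ := mul_le_of_le_one_left (norm_nonneg _) (hp.norm_le p)
      _ < 1 := hy
  set u := Units.oneSub _ hpy
  have hpu : p * u = p * y := by
    simp [u, mul_sub, ← mul_assoc, hp.isIdempotentElem.eq]
  refine ⟨‖(↑u⁻¹ : B) * star ↑u⁻¹‖, norm_nonneg _, ?_⟩
  calc p = p * u * ((↑u⁻¹ : B) * star ↑u⁻¹) * star (p * u) := by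
        simp only [star_mul, hp.isSelfAdjoint.star_eq, mul_assoc, Units.mul_inv_cancel_left]
        rw [← mul_assoc (star _), ← star_mul, Units.mul_inv, star_one, one_mul,
          hp.isIdempotentElem.eq]
    _ ≤ _ := by
      rw [hpu]
      exact CStarAlgebra.star_right_conjugate_le_norm_smul (.mul_star_self _)

theorem exists_pos_smul_le_of_norm_sub_lt_one (hp : IsStarProjection p) {a c : B}
    (h : ‖p - c * a * star c‖ < 1) : ∃ ε : ℝ, 0 < ε ∧ ε • p ≤ p * (c * star c) * p := by
  obtain ⟨γ, hγ, hle⟩ := hp.le_smul_mul_star_of_norm_sub_lt_one h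
  set m := a * star c * star (a * star c)
  have hm :
      p * (c * a * star c) * star (p * (c * a * star c)) ≤ ‖m‖ • (p * (c * star c) * p) := by
    have := CStarAlgebra.star_right_conjugate_le_norm_smul (a := p * c) (b := m) (.mul_star_self _)
    convert this using 1
    · simp only [m, star_mul, mul_assoc]
    · simp only [star_mul, hp.isSelfAdjoint.star_eq, mul_assoc]
  set δ := γ * ‖m‖ + 1
  have hδ : 0 < δ := by positivity
  have hH : 0 ≤ p * (c * star c) * p := by
    simpa [star_mul, hp.isSelfAdjoint.star_eq, mul_assoc] using mul_star_self_nonneg (p * c)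
  refine ⟨δ⁻¹, inv_pos.mpr hδ, (inv_smul_le_iff_of_pos hδ).mpr ?_⟩
  calc p ≤ γ • (p * (c * a * star c) * star (p * (c * a * star c))) := hle
    _ ≤ γ • (‖m‖ • (p * (c * star c) * p)) := smul_le_smul_of_nonneg_left hm hγ
    _ = (γ * ‖m‖) • (p * (c * star c) * p) := smul_smul _ _ _
    _ ≤ δ • (p * (c * star c) * p) := smul_le_smul_of_nonneg_right (by linarith) hH

theorem exists_conj_eq_of_smul_le (hp : IsStarProjection p) {b : B} {ε : ℝ} (hε : 0 < ε)
    (h : ε • p ≤ p * b * p) : ∃ s : B, IsSelfAdjoint s ∧ p * s = s ∧ s * b * s = p := by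
  set u := p * b * p + ε • (1 - p)
  have hεu : ε • 1 ≤ u := by
    calc ε • (1 : B) = ε • p + ε • (1 - p) := by rw [← smul_add, add_sub_cancel]
      _ ≤ u := add_le_add h le_rfl
  have hu : IsStrictlyPositive u := (isStrictlyPositive_one.smul hε).of_le hεu
  have hpu : p * u = p * b * p := by
    simp [u, mul_add, hp.mul_one_sub_self, ← mul_assoc, hp.isIdempotentElem.eq]
  have hup : u * p = p * b * p := by
    simp [u, add_mul, hp.one_sub_mul_self, mul_assoc, hp.isIdempotentElem.eq]
  set k := u ^ (-(1 / 2) : ℝ)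
  have hk : Commute k p := Commute.cfc_nnreal (hup.trans hpu.symm) _
  have hks : IsSelfAdjoint k := CFC.rpow_nonneg.isSelfAdjoint
  refine ⟨k * p, ?_, ?_, ?_⟩
  · rw [IsSelfAdjoint, star_mul, hks.star_eq, hp.isSelfAdjoint.star_eq, hk.eq]
  · rw [← mul_assoc, ← hk.eq, mul_assoc, hp.isIdempotentElem.eq]
  · calc k * p * b * (k * p) = k * (u * p) * k := by
          rw [hup]; nth_rw 2 [hk.eq]; simp only [mul_assoc]
      _ = k * u * k * p := by simp only [mul_assoc, hk.eq]
      _ = p := by rw [CFC.conjugate_rpow_neg_one_half u, one_mul]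

end Unital

end IsStarProjection

theorem IsStarProjection.exists_conj_mul_star_eq_of_mem_closure {A : Type*}
    [NonUnitalCStarAlgebra A] {c p : A} (hp : IsStarProjection p)
    (hmem : p ∈ closure {y : A | ∃ a : A, y = c * a * star c}) :
    ∃ s : A, IsSelfAdjoint s ∧ s * (c * star c) * s = p := by
  obtain ⟨_, ⟨a, rfl⟩, hdist⟩ := Metric.mem_closure_iff.mp hmem 1 one_pos
  have hP : IsStarProjection (p : Unitization ℂ A) := hp.inr
  have hnorm : ‖(p : Unitization ℂ A) - c * a * star (c : Unitization ℂ A)‖ < 1 := by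
    simpa [← Unitization.inr_mul, ← Unitization.inr_star, ← Unitization.inr_sub,
      Unitization.norm_inr, dist_eq_norm] using hdist
  obtain ⟨ε, hε, hle⟩ := hP.exists_pos_smul_le_of_norm_sub_lt_one hnorm
  obtain ⟨S, hS, hPS, hSP⟩ := hP.exists_conj_eq_of_smul_le hε hle
  obtain ⟨s, rfl⟩ : ∃ s : A, (s : Unitization ℂ A) = S :=
    ⟨S.snd, by rw [← hPS]; ext <;> simp⟩
  refine ⟨s, ?_, ?_⟩ <;> apply Unitization.inr_injective (R := ℂ)
  · simpa [Unitization.inr_star] using hS.star_eq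
  · simpa using hSP

/-- Any projection in `closure (c A c*)` is Murray-von Neumann equivalent to a
projection in `closure (c* A c)`. -/
theorem exists_mvnEquiv_in_switch (A : Type*) [NonUnitalCStarAlgebra A] (c p : A)
    (hp : IsProjectionElem p)
    (hmem : p ∈ closure {y : A | ∃ a : A, y = c * a * star c}) :
    ∃ q : A, IsProjectionElem q ∧ q ∈ closure {y : A | ∃ a : A, y = star c * a * c} ∧
      MvNEquiv p q := by
  rw [isProjectionElem_iff_isStarProjection] at hp
  obtain ⟨s, hs, hsp⟩ := hp.exists_conj_mul_star_eq_of_mem_closure hmem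
  have hv : star (star c * s) * (star c * s) = p := by
    simpa only [star_mul, star_star, hs.star_eq, mul_assoc] using hsp
  refine ⟨star c * s * star (star c * s), ?_, subset_closure ⟨s * s, ?_⟩, _, hv, rfl⟩
  · exact isProjectionElem_iff_isStarProjection.mpr
      (IsStarProjection.mul_star_self_of_star_mul_self (hv ▸ hp))
  · simp only [star_mul, star_star, hs.star_eq, mul_assoc]
end
end

section
/- Let A be a C*-algebra with Property (SP), let x ∈ A be a positive element with ‖x‖ = 1, and let ε > 0. Then there exists a nonzero projection p in the hereditary subalgebra closure(x A x) such that for every nonzero projection q ≤ p one has ‖q x q − q‖ < ε, ‖q x − x q‖ < ε, and ‖q x q‖ > 1 − ε. -/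
open Matrix
open scoped ComplexOrder

noncomputable section

/-- A hereditary subalgebra: a closed `*`-subalgebra `B` such that whenever
`0 ≤ a ≤ b` and `b ∈ B`, also `a ∈ B` (positivity expressed via squares). -/
def IsHerSub {A : Type*} [NonUnitalNonAssocRing A] [Star A] [SMul ℂ A] [TopologicalSpace A]
    (B : Set A) : Prop :=
  IsClosed B ∧ (0 : A) ∈ B ∧ (∀ x ∈ B, ∀ y ∈ B, x + y ∈ B) ∧
    (∀ x ∈ B, ∀ y ∈ B, x * y ∈ B) ∧ (∀ (c : ℂ), ∀ x ∈ B, c • x ∈ B) ∧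
    (∀ x ∈ B, star x ∈ B) ∧
    (∀ a b : A, (∃ z : A, a = star z * z) → (∃ z : A, b - a = star z * z) → b ∈ B → a ∈ B)

/-- Property (SP): every nonzero hereditary subalgebra contains a nonzero projection. -/
def PropertySP (A : Type*) [NonUnitalNonAssocRing A] [Star A] [SMul ℂ A] [TopologicalSpace A] :
    Prop :=
  ∀ B : Set A, IsHerSub B → (∃ b ∈ B, b ≠ 0) → ∃ p ∈ B, IsProjectionElem p ∧ p ≠ 0

/-!
Cut the spectrum of `x` off near `1`: for a continuous `f` vanishing below `1 - δ` with
`f 1 = 1`, `y = f(x)` is a nonzero positive element with `closure (y A y) ⊆ closure (x A x)`, so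
(SP) yields a nonzero projection `p ∈ closure (y A y)`. A second cut-off `w = g(x)`, with `g = 1`
on `[1 - δ, ∞)` and `g = 0` below `1 - 2δ`, satisfies `w y = y`, hence fixes `p` and every
`q ≤ p`; as `‖x w - w‖ ≤ 2δ`, this gives `‖x q - q‖ ≤ 2δ`, and all three estimates follow.

That `closure (y A y)` is hereditary comes down to `0 ≤ a ≤ b → a ∈ closure (b A b)`: for
`u = m(b)` with `m(t) = min (ν t) 1 ^ 2` one has `u a u ∈ b A b` and
`‖a - u a u‖ ≤ 2 √(‖a‖ / ν)`, since `(1 - m(t))² t ≤ 1 / ν`.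
-/

open scoped CStarAlgebra

def ramp (lo hi t : ℝ) : ℝ := max 0 (min ((t - lo) / (hi - lo)) 1)

section Ramp

variable {lo hi t : ℝ}

@[fun_prop]
lemma continuous_ramp (lo hi : ℝ) : Continuous (ramp lo hi) := by
  unfold ramp; fun_prop

lemma ramp_nonneg : 0 ≤ ramp lo hi t := le_max_left _ _

lemma ramp_le_one : ramp lo hi t ≤ 1 := max_le zero_le_one (min_le_right _ _)

lemma ramp_of_le (h : lo < hi) (ht : t ≤ lo) : ramp lo hi t = 0 :=
  max_eq_left <| (min_le_left _ _).trans <|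
    div_nonpos_of_nonpos_of_nonneg (by linarith) (by linarith)

lemma ramp_of_ge (h : lo < hi) (ht : hi ≤ t) : ramp lo hi t = 1 := by
  rw [ramp, min_eq_right ((one_le_div (by linarith)).mpr (by linarith)), max_eq_right zero_le_one]

lemma ramp_mul_ramp_of_le {lo' hi' : ℝ} (h : lo < hi) (h' : lo' < hi') (hle : hi ≤ lo') :
    ramp lo hi t * ramp lo' hi' t = ramp lo' hi' t := by
  rcases le_or_gt t lo' with ht | ht
  · rw [ramp_of_le h' ht, mul_zero]
  · rw [ramp_of_ge h (by linarith), one_mul]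

lemma ramp_eq_mul_div_max (h : lo < hi) (hlo : 0 < lo) :
    ramp lo hi t = t * (ramp lo hi t / max t lo) := by
  rcases le_or_gt t lo with ht | ht
  · simp [ramp_of_le h ht]
  · rw [max_eq_left ht.le, mul_div_cancel₀ _ (by linarith)]

lemma abs_mul_ramp_sub_ramp_le (h : lo < hi) (hlo : lo ≤ 1) (ht : t ≤ 1) :
    |t * ramp lo hi t - ramp lo hi t| ≤ 1 - lo := by
  rcases le_or_gt t lo with htlo | htlo
  · rw [ramp_of_le h htlo, mul_zero, sub_zero, abs_zero]
    linarith
  · rw [← sub_one_mul, abs_mul, abs_of_nonpos (by linarith), abs_of_nonneg ramp_nonneg]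
    calc -(t - 1) * ramp lo hi t ≤ -(t - 1) * 1 := by gcongr; linarith; exact ramp_le_one
      _ ≤ 1 - lo := by linarith

end Ramp

/-- `t * unitApprox ν t = min (ν t) 1 ^ 2` for `t ≥ 0`. Splitting off the factor `t` puts
`m(b) = b k(b) = k(b) b` with `k = unitApprox ν` and `k 0 = 0`, so `m(b) a m(b) ∈ b A b`. -/
def unitApprox (ν t : ℝ) : ℝ := ν ^ 2 * t / max 1 (ν * t) ^ 2

section UnitApprox

variable {ν t : ℝ}

@[fun_prop]
lemma continuous_unitApprox (ν : ℝ) : Continuous (unitApprox ν) :=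
  Continuous.div (by fun_prop) (by fun_prop) fun _ ↦ by positivity

@[simp]
lemma unitApprox_zero (ν : ℝ) : unitApprox ν 0 = 0 := by simp [unitApprox]

lemma mul_unitApprox_of_le_one (h : ν * t ≤ 1) : t * unitApprox ν t = (ν * t) ^ 2 := by
  rw [unitApprox, max_eq_left h]; ring

lemma mul_unitApprox_of_one_le (h : 1 ≤ ν * t) : t * unitApprox ν t = 1 := by
  have hνt : ν * t ≠ 0 := (zero_lt_one.trans_le h).ne'
  rw [unitApprox, max_eq_right h, mul_div_assoc', div_eq_one_iff_eq (pow_ne_zero 2 hνt)]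
  ring

lemma mul_unitApprox_mem_Icc (hν : 0 < ν) (ht : 0 ≤ t) : t * unitApprox ν t ∈ Set.Icc 0 1 := by
  rcases le_total (ν * t) 1 with h | h
  · rw [mul_unitApprox_of_le_one h]
    exact ⟨by positivity, pow_le_one₀ (by positivity) h⟩
  · simp [mul_unitApprox_of_one_le h]

lemma abs_one_sub_mul_unitApprox_mul_le (hν : 0 < ν) (ht : 0 ≤ t) :
    |(1 - t * unitApprox ν t) * t * (1 - t * unitApprox ν t)| ≤ ν⁻¹ := by
  have hm := mul_unitApprox_mem_Icc hν ht
  have hm' : 1 - t * unitApprox ν t ∈ Set.Icc 0 1 := ⟨by linarith [hm.2], by linarith [hm.1]⟩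
  rw [abs_of_nonneg (by have := hm'.1; positivity)]
  rcases le_total (ν * t) 1 with h | h
  · calc (1 - t * unitApprox ν t) * t * (1 - t * unitApprox ν t) ≤ 1 * t * 1 := by
          gcongr
          · exact hm'.1
          · exact hm'.2
          · exact hm'.2
      _ ≤ ν⁻¹ := by rw [mul_one, one_mul, ← one_div, le_div_iff₀' hν]; exact h
  · simp [mul_unitApprox_of_one_le h, hν.le]

end UnitApprox

section HerSub

variable {R : Type*} [Semigroup R] [TopologicalSpace R] [ContinuousMul R]

lemma herSub_subset_of_mem {x y : R} (hy : y ∈ herSub x) : herSub y ⊆ herSub x := by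
  refine closure_minimal ?_ isClosed_closure
  rintro _ ⟨c, rfl⟩
  refine map_mem_closure (f := fun z ↦ z * c * z) (by fun_prop) hy ?_
  rintro _ ⟨a, rfl⟩
  exact ⟨a * (x * c * x) * a, by simp only [mul_assoc]⟩

lemma mul_eq_self_of_mem_herSub [T2Space R] {w y v : R} (hwy : w * y = y) (hv : v ∈ herSub y) :
    w * v = v := by
  refine closure_minimal ?_ (isClosed_eq (by fun_prop) continuous_id) hv
  rintro _ ⟨a, rfl⟩
  change w * (y * a * y) = y * a * y
  rw [← mul_assoc, ← mul_assoc, hwy]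

end HerSub

section CFC

variable {A : Type*} [NonUnitalCStarAlgebra A]

lemma cfcₙ_id_mul_conj {k : ℝ → ℝ} {a : A} (ha : IsSelfAdjoint a) (hk : Continuous k)
    (hk0 : k 0 = 0) (z : A) :
    cfcₙ (fun t ↦ t * k t) a * z * cfcₙ (fun t ↦ t * k t) a =
      a * (cfcₙ k a * z * cfcₙ k a) * a := by
  have hleft : cfcₙ (fun t ↦ t * k t) a = a * cfcₙ k a := by
    rw [cfcₙ_mul (fun t ↦ t) k a, cfcₙ_id' ℝ a]
  have hright : cfcₙ (fun t ↦ t * k t) a = cfcₙ k a * a := by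
    rw [cfcₙ_congr (g := fun t ↦ k t * t) fun t _ ↦ mul_comm _ _, cfcₙ_mul k (fun t ↦ t) a,
      cfcₙ_id' ℝ a]
  nth_rw 1 [hleft]
  rw [hright]
  simp only [mul_assoc]

lemma herSub_cfcₙ_id_mul_subset {k : ℝ → ℝ} {a : A} (ha : IsSelfAdjoint a) (hk : Continuous k)
    (hk0 : k 0 = 0) : herSub (cfcₙ (fun t ↦ t * k t) a) ⊆ herSub a := by
  refine closure_minimal ?_ isClosed_closure
  rintro _ ⟨z, rfl⟩
  exact subset_closure ⟨_, cfcₙ_id_mul_conj ha hk hk0 z⟩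

end CFC

section Conjugation

variable {B : Type*} [CStarAlgebra B] [PartialOrder B] [StarOrderedRing B] {a b u : B}

lemma norm_sub_mul_le_sqrt (ha : 0 ≤ a) (hab : a ≤ b) (hu : IsSelfAdjoint u) :
    ‖a - u * a‖ ≤ √(‖(1 - u) * b * (1 - u)‖ * ‖a‖) := by
  set s := CFC.sqrt a
  have hs : IsSelfAdjoint s := .of_nonneg (CFC.sqrt_nonneg a)
  have hss : s * s = a := CFC.sqrt_mul_sqrt_self a ha
  have h1u : star (1 - u) = 1 - u := ((IsSelfAdjoint.one B).sub hu).star_eq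
  have hconj : ‖(1 - u) * s‖ ^ 2 ≤ ‖(1 - u) * b * (1 - u)‖ := by
    have hle := star_left_conjugate_le_conjugate hab (1 - u)
    have hnonneg := star_left_conjugate_nonneg ha (1 - u)
    rw [h1u] at hle hnonneg
    calc ‖(1 - u) * s‖ ^ 2 = ‖(1 - u) * a * (1 - u)‖ := by
          rw [sq, ← CStarRing.norm_self_mul_star, star_mul, hs.star_eq, h1u, mul_assoc,
            ← mul_assoc s, hss, ← mul_assoc]
      _ ≤ ‖(1 - u) * b * (1 - u)‖ := CStarAlgebra.norm_le_norm_of_nonneg_of_le hnonneg hle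
  have hs_norm : ‖s‖ ^ 2 = ‖a‖ := by rw [CFC.norm_sqrt a, Real.sq_sqrt (norm_nonneg _)]
  rw [Real.le_sqrt (norm_nonneg _) (by positivity)]
  calc ‖a - u * a‖ ^ 2 = ‖(1 - u) * s * s‖ ^ 2 := by rw [mul_assoc, hss, sub_mul, one_mul]
    _ ≤ (‖(1 - u) * s‖ * ‖s‖) ^ 2 := by gcongr; exact norm_mul_le _ _
    _ ≤ ‖(1 - u) * b * (1 - u)‖ * ‖a‖ := by rw [mul_pow, hs_norm]; gcongr

lemma norm_sub_conj_le_sqrt (ha : 0 ≤ a) (hab : a ≤ b) (hu : IsSelfAdjoint u) (hu1 : ‖u‖ ≤ 1) :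
    ‖a - u * a * u‖ ≤ 2 * √(‖(1 - u) * b * (1 - u)‖ * ‖a‖) := by
  have hsplit : a - u * a * u = (a - u * a) + u * star (a - u * a) := by
    rw [star_sub, star_mul, ha.isSelfAdjoint.star_eq, hu.star_eq]
    noncomm_ring
  have h := norm_sub_mul_le_sqrt ha hab hu
  calc ‖a - u * a * u‖ ≤ ‖a - u * a‖ + ‖u * star (a - u * a)‖ := hsplit ▸ norm_add_le _ _
    _ ≤ ‖a - u * a‖ + ‖u‖ * ‖a - u * a‖ := by
        grw [norm_mul_le, norm_star]
    _ ≤ _ := by nlinarith [norm_nonneg u, norm_nonneg (a - u * a)]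

lemma norm_sub_conj_cfc_unitApprox_le (ha : 0 ≤ a) (hab : a ≤ b) {ν : ℝ} (hν : 0 < ν) :
    ‖a - cfc (fun t ↦ t * unitApprox ν t) b * a * cfc (fun t ↦ t * unitApprox ν t) b‖ ≤
      2 * √(ν⁻¹ * ‖a‖) := by
  have hb : 0 ≤ b := ha.trans hab
  have hspec : ∀ t ∈ spectrum ℝ b, 0 ≤ t := fun t ht ↦ spectrum_nonneg_of_nonneg hb ht
  set U := cfc (fun t ↦ t * unitApprox ν t) b
  have hU1 : ‖U‖ ≤ 1 := by
    refine norm_cfc_le zero_le_one fun t ht ↦ ?_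
    obtain ⟨h0, h1⟩ := mul_unitApprox_mem_Icc hν (hspec t ht)
    rwa [Real.norm_eq_abs, abs_of_nonneg h0]
  have hconj : (1 - U) * b * (1 - U) =
      cfc (fun t ↦ (1 - t * unitApprox ν t) * t * (1 - t * unitApprox ν t)) b := by
    rw [cfc_mul _ _ b, cfc_mul _ _ b, cfc_sub _ _ b, cfc_const_one ℝ b, cfc_id' ℝ b]
  have hbound : ‖(1 - U) * b * (1 - U)‖ ≤ ν⁻¹ := by
    rw [hconj]
    exact norm_cfc_le (by positivity) fun t ht ↦
      abs_one_sub_mul_unitApprox_mul_le hν (hspec t ht)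
  calc _ ≤ 2 * √(‖(1 - U) * b * (1 - U)‖ * ‖a‖) :=
        norm_sub_conj_le_sqrt ha hab (cfc_predicate _ b) hU1
    _ ≤ 2 * √(ν⁻¹ * ‖a‖) := by gcongr

end Conjugation

section Hereditary

variable {A : Type*} [NonUnitalCStarAlgebra A]

lemma mem_herSub_of_le [PartialOrder A] [StarOrderedRing A] {a b : A} (ha : 0 ≤ a)
    (hab : a ≤ b) : a ∈ herSub b := by
  have hb : 0 ≤ b := ha.trans hab
  rw [herSub, Metric.mem_closure_iff]
  intro ε hε
  set ν := 4 * ‖a‖ / ε ^ 2 + 1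
  have hν : 0 < ν := by positivity
  set u := cfcₙ (fun t ↦ t * unitApprox ν t) b
  refine ⟨u * a * u, ⟨_, cfcₙ_id_mul_conj hb.isSelfAdjoint (continuous_unitApprox ν)
    (unitApprox_zero ν) a⟩, ?_⟩
  have hu : (u : A⁺¹) = cfc (fun t ↦ t * unitApprox ν t) (b : A⁺¹) :=
    Unitization.real_cfcₙ_eq_cfc_inr b _ (by simp)
  have key := norm_sub_conj_cfc_unitApprox_le (Unitization.inr_nonneg_iff.mpr ha)
    ((Unitization.inr_le_iff a b).mpr hab) hν
  rw [← hu, ← Unitization.inr_mul, ← Unitization.inr_mul, ← Unitization.inr_sub,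
    Unitization.norm_inr, Unitization.norm_inr] at key
  rw [dist_eq_norm]
  refine key.trans_lt ?_
  have hνε : ν * (ε / 2) ^ 2 = ‖a‖ + (ε / 2) ^ 2 := by
    simp only [ν]
    field_simp
    ring
  have hsmall : ν⁻¹ * ‖a‖ < (ε / 2) ^ 2 := by
    rw [inv_mul_lt_iff₀ hν, hνε]
    linarith [pow_pos (half_pos hε) 2]
  calc 2 * √(ν⁻¹ * ‖a‖) < 2 * √((ε / 2) ^ 2) := by gcongr
    _ = ε := by rw [Real.sqrt_sq (half_pos hε).le]; ring

lemma isHerSub_herSub {y : A} (hy : IsSelfAdjoint y) : IsHerSub (herSub y) := by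
  let _ := CStarAlgebra.spectralOrder A
  have := CStarAlgebra.spectralOrderedRing A
  refine ⟨isClosed_closure, subset_closure ⟨0, by simp⟩, ?_, ?_, ?_, ?_, ?_⟩
  · intro a ha b hb
    refine map_mem_closure₂ continuous_add ha hb ?_
    rintro _ ⟨r, rfl⟩ _ ⟨s, rfl⟩
    exact ⟨r + s, by noncomm_ring⟩
  · intro a ha b hb
    refine map_mem_closure₂ continuous_mul ha hb ?_
    rintro _ ⟨r, rfl⟩ _ ⟨s, rfl⟩
    exact ⟨r * (y * y) * s, by noncomm_ring⟩
  · intro c a ha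
    refine map_mem_closure (continuous_const_smul c) ha ?_
    rintro _ ⟨r, rfl⟩
    exact ⟨c • r, by rw [mul_smul_comm, smul_mul_assoc]⟩
  · intro a ha
    refine map_mem_closure continuous_star ha ?_
    rintro _ ⟨r, rfl⟩
    exact ⟨star r, by rw [star_mul, star_mul, hy.star_eq, mul_assoc]⟩
  · intro a b ha hab hb
    refine herSub_subset_of_mem hb (mem_herSub_of_le ?_ (sub_nonneg.mp ?_))
    · exact CStarAlgebra.nonneg_iff_eq_star_mul_self.mpr ha
    · exact CStarAlgebra.nonneg_iff_eq_star_mul_self.mpr hab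

end Hereditary

section RampCFC

variable {A : Type*} [NonUnitalCStarAlgebra A] {x : A} {lo hi : ℝ}

lemma herSub_cfcₙ_ramp_subset (hx : IsSelfAdjoint x) (h : lo < hi) (hlo : 0 < lo) :
    herSub (cfcₙ (ramp lo hi) x) ⊆ herSub x := by
  have hk : Continuous fun t ↦ ramp lo hi t / max t lo :=
    (continuous_ramp lo hi).div (by fun_prop) fun t ↦ (lt_max_of_lt_right hlo).ne'
  have hk0 : ramp lo hi 0 / max 0 lo = 0 := by rw [ramp_of_le h hlo.le, zero_div]
  rw [show ramp lo hi = fun t ↦ t * (ramp lo hi t / max t lo) from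
    funext fun _ ↦ ramp_eq_mul_div_max h hlo]
  exact herSub_cfcₙ_id_mul_subset hx hk hk0

lemma cfcₙ_ramp_mul_cfcₙ_ramp {lo' hi' : ℝ} (h : lo < hi) (h' : lo' < hi')
    (hle : hi ≤ lo') (hlo : 0 ≤ lo) :
    cfcₙ (ramp lo hi) x * cfcₙ (ramp lo' hi') x = cfcₙ (ramp lo' hi') x := by
  rw [← cfcₙ_mul _ _ x (by fun_prop) (ramp_of_le h hlo) (by fun_prop)
    (ramp_of_le h' (hlo.trans (h.le.trans hle)))]
  exact cfcₙ_congr fun t _ ↦ ramp_mul_ramp_of_le h h' hle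

lemma cfcₙ_ramp_ne_zero (hx : IsSelfAdjoint x) (h : lo < hi) (hlo : 0 ≤ lo) {t : ℝ}
    (ht : t ∈ quasispectrum ℝ x) (hit : hi ≤ t) : cfcₙ (ramp lo hi) x ≠ 0 := by
  intro h0
  have := norm_apply_le_norm_cfcₙ (ramp lo hi) x ht (by fun_prop) (ramp_of_le h hlo)
  rw [h0, ramp_of_ge h hit, norm_zero, norm_one] at this
  exact one_ne_zero (le_antisymm this zero_le_one)

lemma norm_mul_cfcₙ_ramp_sub_le (hx : IsSelfAdjoint x) (h : lo < hi) (hlo : 0 ≤ lo)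
    (hlo1 : lo ≤ 1) (hspec : ∀ t ∈ quasispectrum ℝ x, t ≤ 1) :
    ‖x * cfcₙ (ramp lo hi) x - cfcₙ (ramp lo hi) x‖ ≤ 1 - lo := by
  have h0 : ramp lo hi 0 = 0 := ramp_of_le h hlo
  have e : x * cfcₙ (ramp lo hi) x - cfcₙ (ramp lo hi) x =
      cfcₙ (fun t ↦ t * ramp lo hi t - ramp lo hi t) x := by
    rw [cfcₙ_sub _ _ x (by fun_prop) (by simp [h0]) (by fun_prop) h0,
      cfcₙ_mul (fun t ↦ t) _ x, cfcₙ_id' ℝ x]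
  rw [e]
  exact norm_cfcₙ_le fun t ht ↦ abs_mul_ramp_sub_ramp_le h hlo1 (hspec t ht)

end RampCFC

section Spectrum

variable {A : Type*} [NonUnitalCStarAlgebra A] [PartialOrder A] [StarOrderedRing A] {x : A}

lemma quasispectrum_subset_Icc_of_nonneg (hx : 0 ≤ x) : quasispectrum ℝ x ⊆ Set.Icc 0 ‖x‖ := by
  intro t ht
  refine ⟨quasispectrum_nonneg_of_nonneg x hx t ht, ?_⟩
  rw [Unitization.quasispectrum_eq_spectrum_inr' ℝ ℂ x] at ht
  simpa [Unitization.norm_inr] using (le_abs_self t).trans (spectrum.norm_le_norm_of_mem ht)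

lemma norm_mem_quasispectrum_of_nonneg (hx : 0 ≤ x) : ‖x‖ ∈ quasispectrum ℝ x := by
  rw [Unitization.quasispectrum_eq_spectrum_inr' ℝ ℂ x]
  simpa [Unitization.norm_inr] using
    CStarAlgebra.norm_mem_spectrum_of_nonneg (Unitization.inr_nonneg_iff.mpr hx)

end Spectrum

lemma IsProjectionElem.norm_eq_one {E : Type*} [NonUnitalNormedRing E] [StarRing E] [CStarRing E]
    {q : E} (hq : IsProjectionElem q) (hq0 : q ≠ 0) : ‖q‖ = 1 := by
  have h : ‖q‖ * ‖q‖ = ‖q‖ * 1 := by rw [← CStarRing.norm_star_mul_self, hq.1, hq.2, mul_one]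
  exact mul_left_cancel₀ (norm_ne_zero_iff.mpr hq0) h

lemma IsProjectionElem.almost_fixed_of_mul_eq {E : Type*} [NonUnitalNormedRing E] [StarRing E]
    [CStarRing E] {q w x : E} {η : ℝ} (hq : IsProjectionElem q) (hq0 : q ≠ 0)
    (hx : IsSelfAdjoint x) (hwq : w * q = q) (hxw : ‖x * w - w‖ ≤ η) :
    ‖q * x * q - q‖ ≤ η ∧ ‖q * x - x * q‖ ≤ 2 * η ∧ 1 - η ≤ ‖q * x * q‖ := by
  have hq1 := hq.norm_eq_one hq0
  have hxq : ‖x * q - q‖ ≤ η := by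
    calc ‖x * q - q‖ = ‖(x * w - w) * q‖ := by rw [sub_mul, mul_assoc, hwq]
      _ ≤ η := by grw [norm_mul_le, hq1, mul_one, hxw]
  have hqxq : ‖q * x * q - q‖ ≤ η := by
    calc ‖q * x * q - q‖ = ‖q * (x * q - q)‖ := by rw [mul_sub, mul_assoc, hq.2]
      _ ≤ η := by grw [norm_mul_le, hq1, one_mul, hxq]
  refine ⟨hqxq, ?_, ?_⟩
  · calc ‖q * x - x * q‖ = ‖star (x * q - q) - (x * q - q)‖ := by
          rw [star_sub, star_mul, hq.1, hx.star_eq, sub_sub_sub_cancel_right]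
      _ ≤ 2 * η := by grw [norm_sub_le, norm_star, hxq]; linarith
  · have := norm_sub_norm_le q (q * x * q)
    rw [norm_sub_rev, hq1] at this
    linarith

/-- Cuntz's lemma: in a C*-algebra with Property (SP), for positive `x` of norm one
there is a nonzero projection `p` in the hereditary subalgebra generated by `x` such
that every nonzero subprojection `q ≤ p` almost commutes with `x` and `‖q x q‖ > 1 - ε`. -/
theorem exists_proj_almost_fixed_by (A : Type*) [NonUnitalCStarAlgebra A]
    (hSP : PropertySP A) (x : A) (hx : ∃ z : A, x = star z * z) (hxnorm : ‖x‖ = 1)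
    (ε : ℝ) (hε : 0 < ε) :
    ∃ p : A, IsProjectionElem p ∧ p ≠ 0 ∧ p ∈ herSub x ∧
      ∀ q : A, IsProjectionElem q → q ≠ 0 → p * q = q →
        ‖q * x * q - q‖ < ε ∧ ‖q * x - x * q‖ < ε ∧ 1 - ε < ‖q * x * q‖ := by
  let _ := CStarAlgebra.spectralOrder A
  have := CStarAlgebra.spectralOrderedRing A
  have hx0 : 0 ≤ x := CStarAlgebra.nonneg_iff_eq_star_mul_self.mpr hx
  have hspec := quasispectrum_subset_Icc_of_nonneg hx0
  have hone := norm_mem_quasispectrum_of_nonneg hx0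
  rw [hxnorm] at hspec hone
  set δ := min (ε / 5) (1 / 2)
  have hδ : 0 < δ ∧ δ ≤ ε / 5 ∧ δ ≤ 1 / 2 := ⟨by positivity, min_le_left _ _, min_le_right _ _⟩
  set y := cfcₙ (ramp (1 - δ) 1) x
  set w := cfcₙ (ramp (1 - 2 * δ) (1 - δ)) x
  have hy0 : 0 ≤ y := cfcₙ_nonneg fun _ _ ↦ ramp_nonneg
  have hyne : y ≠ 0 :=
    cfcₙ_ramp_ne_zero hx0.isSelfAdjoint (by linarith) (by linarith) hone le_rfl
  obtain ⟨p, hpy, hp, hp0⟩ :=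
    hSP _ (isHerSub_herSub hy0.isSelfAdjoint) ⟨y, mem_herSub_of_le hy0 le_rfl, hyne⟩
  have hwp : w * p = p :=
    mul_eq_self_of_mem_herSub (cfcₙ_ramp_mul_cfcₙ_ramp (by linarith) (by linarith) le_rfl
      (by linarith)) hpy
  have hxw : ‖x * w - w‖ ≤ 2 * δ := by
    simpa using norm_mul_cfcₙ_ramp_sub_le hx0.isSelfAdjoint (lo := 1 - 2 * δ) (hi := 1 - δ)
      (by linarith) (by linarith) (by linarith) fun t ht ↦ (hspec ht).2
  refine ⟨p, hp, hp0, herSub_cfcₙ_ramp_subset hx0.isSelfAdjoint (by linarith) (by linarith) hpy,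
    fun q hq hq0 hpq ↦ ?_⟩
  obtain ⟨h₁, h₂, h₃⟩ := hq.almost_fixed_of_mul_eq hq0 hx0.isSelfAdjoint
    (by rw [← hpq, ← mul_assoc, hwp]) hxw
  exact ⟨by linarith, by linarith, by linarith⟩
end
end

section
/- Let A be an infinite dimensional simple unital C*-algebra with Property (SP), let B ⊆ A be a nonzero hereditary subalgebra, and let n ∈ ℕ. Then there exist nonzero, mutually orthogonal, pairwise Murray-von Neumann equivalent projections p_1, …, p_n ∈ B. -/
open Matrix
open scoped ComplexOrder

noncomputable section

/-- Simplicity of a C*-algebra: it is nonzero and has no nontrivial closed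
two-sided ideals. -/
def IsSimpleCStarAlgebra (A : Type*) [NonUnitalNonAssocRing A] [TopologicalSpace A] : Prop :=
  (∃ a : A, a ≠ 0) ∧
    ∀ I : TwoSidedIdeal A, IsClosed (I : Set A) → (I : Set A) = {0} ∨ (I : Set A) = Set.univ

/-!
If a nonzero hereditary subalgebra `B` contained no two orthogonal nonzero positive elements, then
for a nonzero projection `q ∈ B` the positive and negative parts of every self-adjoint `x ∈ qAq`
could not both be nonzero, so `x - l • q` would be comparable with `0` for every real `l`;
connectedness of `ℝ` then forces `x ∈ ℝ q`, hence `qAq = ℂ q`, and writing `1 = ∑ aᵢ q bᵢ`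
(simplicity) makes `A` finite dimensional. Splitting `B` repeatedly gives `n` orthogonal nonzero
projections `qᵢ ∈ B`.

Simplicity also gives `x ∈ qAr` with `x ≠ 0` for nonzero projections `q, r`. Property (SP),
applied to a spectral cut-down of `x⋆x` away from `0`, yields a nonzero projection `f ≤ r` on
which `x⋆x` is invertible, so `x h f`, with `h` equal to `(x⋆x)^(-1/2)` there, is a partial
isometry from `f` onto a subprojection of `q`. Iterating over the `qᵢ` gives one nonzero
projection equivalent to a subprojection of each `qᵢ`; these subprojections are the required
family.
-/

section Ring

variable {A : Type*} [Ring A] [StarRing A]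

lemma IsProjectionElem.isSelfAdjoint {q : A} (hq : IsProjectionElem q) : IsSelfAdjoint q := hq.1

lemma IsSelfAdjoint.mul_eq_self_comm {q z : A} (hq : IsSelfAdjoint q) (hz : IsSelfAdjoint z) :
    q * z = z ↔ z * q = z :=
  ⟨fun h => by simpa [hq.star_eq, hz.star_eq] using congrArg star h,
    fun h => by simpa [hq.star_eq, hz.star_eq] using congrArg star h⟩

lemma isProjectionElem_mul_star {v f : A} (hv : star v * v = f) (hvf : v * f = v) :
    IsProjectionElem (v * star v) :=
  ⟨by rw [star_mul, star_star], by rw [mul_assoc, ← mul_assoc (star v), hv, ← mul_assoc, hvf]⟩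

lemma mvnEquiv_mul_star {v w f : A} (hv : star v * v = f) (hw : star w * w = f)
    (hvf : v * f = v) (hwf : w * f = w) : MvNEquiv (v * star v) (w * star w) := by
  refine ⟨w * star v, ?_, ?_⟩
  · calc star (w * star v) * (w * star v) = v * (star w * w) * star v := by
          rw [star_mul, star_star]; noncomm_ring
      _ = v * star v := by rw [hw, hvf]
  · calc w * star v * star (w * star v) = w * (star v * v) * star w := by
          rw [star_mul, star_star]; noncomm_ring
      _ = w * star w := by rw [hv, hwf]

end Ring

/-- Used in place of the hereditary subalgebra generated by `a`, which it contains: membership is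
an algebraic condition, so no approximate units are needed. -/
def annHull {A : Type*} [Mul A] [Star A] [Zero A] (a : A) : Set A :=
  {x | ∀ y, a * y = 0 → x * y = 0 ∧ star x * y = 0}

section AnnHull

variable {A : Type*} [Ring A] [StarRing A] {a b x y z : A}

lemma self_mem_annHull (ha : IsSelfAdjoint a) : a ∈ annHull a :=
  fun _ hy => ⟨hy, by rwa [ha.star_eq]⟩

lemma annHull_subset (h : a ∈ annHull b) : annHull a ⊆ annHull b :=
  fun _ hx y hy => hx y (h y hy).1

lemma mul_eq_of_mem_annHull (h : a * y = a) (hx : x ∈ annHull a) : x * y = x := by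
  have := (hx (y - 1) (by rw [mul_sub, mul_one, h, sub_self])).1
  rwa [mul_sub, mul_one, sub_eq_zero] at this

lemma mul_eq_zero_of_mem_annHull (hb : IsSelfAdjoint b) (hab : a * b = 0) (hx : x ∈ annHull a)
    (hz : z ∈ annHull b) : x * z = 0 := by
  have hbx : b * star x = 0 := by simpa [hb.star_eq] using congrArg star (hx b hab).1
  simpa using congrArg star (hz (star x) hbx).2

end AnnHull

lemma IsHerSub.inter {A : Type*} [NonUnitalNonAssocRing A] [Star A] [SMul ℂ A]
    [TopologicalSpace A] {B C : Set A} (hB : IsHerSub B) (hC : IsHerSub C) :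
    IsHerSub (B ∩ C) := by
  obtain ⟨hB₁, hB₂, hB₃, hB₄, hB₅, hB₆, hB₇⟩ := hB
  obtain ⟨hC₁, hC₂, hC₃, hC₄, hC₅, hC₆, hC₇⟩ := hC
  exact ⟨hB₁.inter hC₁, ⟨hB₂, hC₂⟩,
    fun x hx y hy => ⟨hB₃ x hx.1 y hy.1, hC₃ x hx.2 y hy.2⟩,
    fun x hx y hy => ⟨hB₄ x hx.1 y hy.1, hC₄ x hx.2 y hy.2⟩,
    fun c x hx => ⟨hB₅ c x hx.1, hC₅ c x hx.2⟩,
    fun x hx => ⟨hB₆ x hx.1, hC₆ x hx.2⟩,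
    fun a b ha hab hb => ⟨hB₇ a b ha hab hb.1, hC₇ a b ha hab hb.2⟩⟩

lemma TwoSidedIdeal.exists_multiset_sum_eq_of_mem_span_singleton {R : Type*} [Ring R] {r x : R}
    (hx : x ∈ TwoSidedIdeal.span {r}) :
    ∃ s : Multiset (R × R), (s.map fun p => p.1 * r * p.2).sum = x := by
  induction hx using TwoSidedIdeal.span_induction with
  | mem y hy => exact ⟨{(1, 1)}, by simp [Set.mem_singleton_iff.mp hy]⟩
  | zero => exact ⟨0, by simp⟩
  | add y z _ _ hy hz =>
    obtain ⟨s, rfl⟩ := hy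
    obtain ⟨t, rfl⟩ := hz
    exact ⟨s + t, by simp⟩
  | neg y _ hy =>
    obtain ⟨s, rfl⟩ := hy
    exact ⟨s.map fun p => (-p.1, p.2), by simp [Multiset.sum_map_neg]⟩
  | left_absorb a y _ hy =>
    obtain ⟨s, rfl⟩ := hy
    exact ⟨s.map fun p => (a * p.1, p.2), by simp [← Multiset.sum_map_mul_left, mul_assoc]⟩
  | right_absorb b y _ hy =>
    obtain ⟨s, rfl⟩ := hy
    exact ⟨s.map fun p => (p.1, p.2 * b), by simp [← Multiset.sum_map_mul_right, mul_assoc]⟩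

lemma IsSimpleCStarAlgebra.one_mem_span_singleton {A : Type*} [NormedRing A] [CompleteSpace A]
    (hsimple : IsSimpleCStarAlgebra A) {r : A} (hr : r ≠ 0) :
    (1 : A) ∈ TwoSidedIdeal.span {r} := by
  set I := TwoSidedIdeal.span {r}
  let J : TwoSidedIdeal A := .mk' (closure I) (subset_closure I.zero_mem)
    (fun hx hy => map_mem_closure₂ continuous_add hx hy fun _ ha _ hb => I.add_mem ha hb)
    (fun hx => map_mem_closure continuous_neg hx fun _ ha => I.neg_mem ha)
    (fun {x _} hy => map_mem_closure (continuous_const_mul x) hy fun _ hb => I.mul_mem_left _ _ hb)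
    (fun {_ y} hx => map_mem_closure (f := (· * y)) (continuous_mul_const y) hx
      fun _ ha => I.mul_mem_right _ _ ha)
  have hJ : (J : Set A) = closure I := by ext; simp [J]
  have h1 : (1 : A) ∈ closure (I : Set A) := by
    rcases hsimple.2 J (hJ ▸ isClosed_closure) with h | h
    · have hrJ : r ∈ (J : Set A) := hJ ▸ subset_closure (TwoSidedIdeal.subset_span rfl)
      rw [h] at hrJ
      exact absurd hrJ hr
    · exact hJ ▸ h ▸ Set.mem_univ 1
  obtain ⟨u, ⟨u, rfl⟩, hu⟩ := mem_closure_iff.mp h1 _ Units.isOpen isUnit_one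
  simpa using I.mul_mem_left (↑u⁻¹) _ hu

section CStarAlgebra

variable {A : Type*} [CStarAlgebra A]

lemma mul_star_mul_self_of_isProjectionElem {w : A} (h : IsProjectionElem (star w * w)) :
    w * (star w * w) = w := by
  have : star (w - w * (star w * w)) * (w - w * (star w * w)) = 0 := by
    calc star (w - w * (star w * w)) * (w - w * (star w * w))
        = star w * w - star w * w * (star w * w) - star w * w * (star w * w)
          + star w * w * (star w * w) * (star w * w) := by
          simp only [star_sub, star_mul, star_star]; noncomm_ring
      _ = 0 := by rw [h.2, h.2]; abel
  exact (sub_eq_zero.mp ((CStarRing.star_mul_self_eq_zero_iff _).mp this)).symm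

lemma IsProjectionElem.mul_eq_of_mul_self_eq {q z w y : A} (hq : IsProjectionElem q)
    (hz : IsSelfAdjoint z) (hzz : z * z = w * y) (hyq : y * q = y) : q * z = z := by
  refine (hq.isSelfAdjoint.mul_eq_self_comm hz).mpr ?_
  have : star (z * (1 - q)) * (z * (1 - q)) = 0 := by
    calc star (z * (1 - q)) * (z * (1 - q)) = star (1 - q) * (z * z) * (1 - q) := by
          rw [star_mul, hz.star_eq]; noncomm_ring
      _ = star (1 - q) * w * (y * (1 - q)) := by rw [hzz]; noncomm_ring
      _ = 0 := by rw [mul_sub, mul_one, hyq, sub_self, mul_zero]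
  rw [CStarRing.star_mul_self_eq_zero_iff, mul_sub, mul_one, sub_eq_zero] at this
  exact this.symm

lemma IsSimpleCStarAlgebra.exists_mul_mul_ne_zero (hsimple : IsSimpleCStarAlgebra A) {q r : A}
    (hq : q ≠ 0) (hr : r ≠ 0) : ∃ a, q * a * r ≠ 0 := by
  obtain ⟨s, hs⟩ := TwoSidedIdeal.exists_multiset_sum_eq_of_mem_span_singleton
    (hsimple.one_mem_span_singleton hr)
  by_contra! h
  apply hq
  calc q = q * (s.map fun p => p.1 * r * p.2).sum := by rw [hs, mul_one]
    _ = 0 := by simp [← Multiset.sum_map_mul_left, ← mul_assoc, h]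

lemma IsSimpleCStarAlgebra.finiteDimensional_of_forall_mul_mul_eq_smul
    (hsimple : IsSimpleCStarAlgebra A) {q : A} (hq : q ≠ 0)
    (h : ∀ y, ∃ c : ℂ, q * y * q = c • q) : FiniteDimensional ℂ A := by
  obtain ⟨s, hs⟩ := TwoSidedIdeal.exists_multiset_sum_eq_of_mem_span_singleton
    (hsimple.one_mem_span_singleton hq)
  set T := Set.image2 (fun p p' : A × A => p.1 * q * p'.2) {p | p ∈ s} {p | p ∈ s}
  refine Module.finite_def.2 (Submodule.fg_def.2 ⟨T, s.finite_toSet.image2 _ s.finite_toSet,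
    eq_top_iff.2 fun z _ => ?_⟩)
  have hz : z = (s.map fun p' => (s.map fun p =>
      p.1 * (q * (p.2 * z * p'.1) * q) * p'.2).sum).sum := by
    conv_lhs => rw [← mul_one z, ← one_mul z, ← hs]
    simp only [← Multiset.sum_map_mul_left, ← Multiset.sum_map_mul_right, mul_assoc]
  rw [hz]
  refine multiset_sum_mem _ fun x hx => ?_
  obtain ⟨p', hp', rfl⟩ := Multiset.mem_map.mp hx
  refine multiset_sum_mem _ fun x hx => ?_
  obtain ⟨p, hp, rfl⟩ := Multiset.mem_map.mp hx
  obtain ⟨c, hc⟩ := h (p.2 * z * p'.1)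
  rw [hc, mul_smul_comm, smul_mul_assoc]
  exact Submodule.smul_mem _ c (Submodule.subset_span ⟨p, hp, p', hp', rfl⟩)

lemma IsProjectionElem.exists_mul_mul_eq_smul {q : A} (hq : IsProjectionElem q)
    (h : ∀ x, IsSelfAdjoint x → q * x = x → ∃ l : ℝ, x = l • q) (y : A) :
    ∃ c : ℂ, q * y * q = c • q := by
  have hcorner (z : A) (hz : IsSelfAdjoint z) : ∃ l : ℝ, q * z * q = l • q :=
    h _ (by simpa [hq.1] using hz.conjugate' q) (by rw [← mul_assoc, ← mul_assoc, hq.2])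
  obtain ⟨l₁, h₁⟩ := hcorner _ (realPart y).2
  obtain ⟨l₂, h₂⟩ := hcorner _ (imaginaryPart y).2
  refine ⟨l₁ + Complex.I * l₂, ?_⟩
  conv_lhs => rw [← realPart_add_I_smul_imaginaryPart y]
  rw [mul_add, add_mul, mul_smul_comm, smul_mul_assoc, h₁, h₂, add_smul, mul_smul,
    Complex.coe_smul, Complex.coe_smul]

end CStarAlgebra

section Order

variable {A : Type*} [CStarAlgebra A] [PartialOrder A] [StarOrderedRing A]

lemma isHerSub_annHull (a : A) : IsHerSub (annHull a) := by
  refine ⟨?_, fun y _ => by simp, fun x hx z hz y hy => ?_, fun x hx z hz y hy => ?_,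
    fun c x hx y hy => ?_, fun x hx y hy => ⟨(hx y hy).2, by simpa using (hx y hy).1⟩, ?_⟩
  · simp only [annHull, Set.ofPred_forall, Set.ofPred_and]
    exact isClosed_iInter fun y => isClosed_iInter fun _ =>
      (isClosed_eq (by fun_prop) continuous_const).inter
        (isClosed_eq (by fun_prop) continuous_const)
  · simp [add_mul, hx y hy, hz y hy]
  · simp [mul_assoc, hx y hy, hz y hy]
  · simp [hx y hy]
  · rintro c b ⟨z, rfl⟩ ⟨w, hw⟩ hb y hy
    have hsum : star (z * y) * (z * y) + star (w * y) * (w * y) = 0 := by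
      calc star (z * y) * (z * y) + star (w * y) * (w * y)
          = star y * (star z * z + star w * w) * y := by simp only [star_mul]; noncomm_ring
        _ = star y * (b * y) := by rw [← hw, add_sub_cancel, mul_assoc]
        _ = 0 := by rw [(hb y hy).1, mul_zero]
    have hzy : z * y = 0 := (CStarRing.star_mul_self_eq_zero_iff _).mp
      ((add_eq_zero_iff_of_nonneg (star_mul_self_nonneg _) (star_mul_self_nonneg _)).mp hsum).1
    simp [mul_assoc, hzy]

lemma IsHerSub.mem_of_le {B : Set A} (hB : IsHerSub B) {a b : A} (ha : 0 ≤ a) (hab : a ≤ b)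
    (hb : b ∈ B) : a ∈ B :=
  hB.2.2.2.2.2.2 a b (CStarAlgebra.nonneg_iff_eq_star_mul_self.mp ha)
    (CStarAlgebra.nonneg_iff_eq_star_mul_self.mp (sub_nonneg.mpr hab)) hb

lemma IsProjectionElem.le_norm_smul {q x : A} (hq : IsProjectionElem q) (hx : IsSelfAdjoint x)
    (hqx : q * x = x) : x ≤ ‖x‖ • q := by
  have hxq : x * q = x := (hq.isSelfAdjoint.mul_eq_self_comm hx).mp hqx
  calc x = star q * x * q := by rw [hq.1, hqx, hxq]
    _ ≤ star q * algebraMap ℝ A ‖x‖ * q :=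
        star_left_conjugate_le_conjugate hx.le_algebraMap_norm_self q
    _ = ‖x‖ • q := by
        rw [hq.1, Algebra.algebraMap_eq_smul_one, mul_smul_comm, mul_one, smul_mul_assoc, hq.2]

lemma IsHerSub.mem_of_mul_eq {B : Set A} (hB : IsHerSub B) {q p : A} (hqB : q ∈ B)
    (hq : IsProjectionElem q) (hp : 0 ≤ p) (hqp : q * p = p) : p ∈ B :=
  hB.mem_of_le hp (hq.le_norm_smul hp.isSelfAdjoint hqp)
    (Complex.coe_smul ‖p‖ q ▸ hB.2.2.2.2.1 _ q hqB)

lemma IsHerSub.nonneg_or_nonpos {B : Set A} (hB : IsHerSub B) {q y : A} (hqB : q ∈ B)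
    (hq : IsProjectionElem q)
    (horth : ∀ c ∈ B, ∀ d ∈ B, 0 ≤ c → 0 ≤ d → c ≠ 0 → d ≠ 0 → c * d ≠ 0)
    (hy : IsSelfAdjoint y) (hqy : q * y = y) : 0 ≤ y ∨ y ≤ 0 := by
  have hyq : y * q = y := (hq.isSelfAdjoint.mul_eq_self_comm hy).mp hqy
  have hpos : q * y⁺ = y⁺ := by
    refine hq.mul_eq_of_mul_self_eq (CFC.posPart_nonneg y).isSelfAdjoint (w := y⁺) ?_ hyq
    calc y⁺ * y⁺ = y⁺ * (y⁺ - y⁻) := by rw [mul_sub, CFC.posPart_mul_negPart, sub_zero]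
      _ = y⁺ * y := by rw [CFC.posPart_sub_negPart y hy]
  have hneg : q * y⁻ = y⁻ := by
    refine hq.mul_eq_of_mul_self_eq (CFC.negPart_nonneg y).isSelfAdjoint (w := -y⁻) ?_ hyq
    calc y⁻ * y⁻ = -y⁻ * (y⁺ - y⁻) := by
          rw [neg_mul, mul_sub, CFC.negPart_mul_posPart, zero_sub, neg_neg]
      _ = -y⁻ * y := by rw [CFC.posPart_sub_negPart y hy]
  by_cases hp : y⁺ = 0
  · exact Or.inr ((CFC.posPart_eq_zero_iff y hy).mp hp)
  by_cases hn : y⁻ = 0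
  · exact Or.inl ((CFC.negPart_eq_zero_iff y hy).mp hn)
  exact absurd (CFC.posPart_mul_negPart y)
    (horth _ (hB.mem_of_mul_eq hqB hq (CFC.posPart_nonneg y) hpos)
      _ (hB.mem_of_mul_eq hqB hq (CFC.negPart_nonneg y) hneg)
      (CFC.posPart_nonneg y) (CFC.negPart_nonneg y) hp hn)

lemma IsProjectionElem.exists_eq_smul {q x : A} (hq : IsProjectionElem q) (hx : IsSelfAdjoint x)
    (hqx : q * x = x) (h : ∀ l : ℝ, 0 ≤ x - l • q ∨ x - l • q ≤ 0) :
    ∃ l : ℝ, x = l • q := by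
  have hcont : Continuous fun l : ℝ => x - l • q := by fun_prop
  have hlow : 0 ≤ x - (-‖x‖) • q := by
    have := hq.le_norm_smul hx.neg (by rw [mul_neg, hqx])
    rw [norm_neg] at this
    rw [neg_smul, sub_neg_eq_add]
    exact neg_le_iff_add_nonneg'.mp this
  have hup : x - ‖x‖ • q ≤ 0 := sub_nonpos.mpr (hq.le_norm_smul hx hqx)
  obtain ⟨l, -, hl₀, hl₁⟩ := isPreconnected_closed_iff.mp isPreconnected_univ
    {l | 0 ≤ x - l • q} {l | x - l • q ≤ 0}
    (isClosed_le continuous_const hcont) (isClosed_le hcont continuous_const)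
    (fun l _ => h l) ⟨-‖x‖, trivial, hlow⟩ ⟨‖x‖, trivial, hup⟩
  exact ⟨l, sub_eq_zero.mp (le_antisymm hl₁ hl₀)⟩

theorem exists_orthogonal_pair (hinf : ¬ FiniteDimensional ℂ A)
    (hsimple : IsSimpleCStarAlgebra A) (hSP : PropertySP A) {B : Set A} (hB : IsHerSub B)
    (hBne : ∃ b ∈ B, b ≠ 0) :
    ∃ c ∈ B, ∃ d ∈ B, 0 ≤ c ∧ 0 ≤ d ∧ c ≠ 0 ∧ d ≠ 0 ∧ c * d = 0 := by
  obtain ⟨q, hqB, hq, hq0⟩ := hSP B hB hBne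
  by_contra! horth
  refine hinf (hsimple.finiteDimensional_of_forall_mul_mul_eq_smul hq0
    (hq.exists_mul_mul_eq_smul fun x hx hqx => hq.exists_eq_smul hx hqx fun l =>
      hB.nonneg_or_nonpos hqB hq horth (hx.sub ((IsSelfAdjoint.all l).smul hq.isSelfAdjoint)) ?_))
  rw [mul_sub, hqx, mul_smul_comm, hq.2]

theorem exists_orthogonal_projections (hinf : ¬ FiniteDimensional ℂ A)
    (hsimple : IsSimpleCStarAlgebra A) (hSP : PropertySP A) (n : ℕ) {B : Set A}
    (hB : IsHerSub B) (hBne : ∃ b ∈ B, b ≠ 0) :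
    ∃ p : Fin n → A, (∀ i, p i ∈ B) ∧ (∀ i, IsProjectionElem (p i)) ∧ (∀ i, p i ≠ 0) ∧
      Pairwise fun i j => p i * p j = 0 := by
  induction n generalizing B with
  | zero => exact ⟨Fin.elim0, finZeroElim, finZeroElim, finZeroElim, finZeroElim⟩
  | succ n ih =>
    obtain ⟨c, hcB, d, hdB, hc, hd, hc0, hd0, hcd⟩ :=
      exists_orthogonal_pair hinf hsimple hSP hB hBne
    obtain ⟨p₀, ⟨hp₀B, hp₀c⟩, hp₀, hp₀0⟩ := hSP _ (hB.inter (isHerSub_annHull c))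
      ⟨c, ⟨hcB, self_mem_annHull hc.isSelfAdjoint⟩, hc0⟩
    obtain ⟨p, hpB, hp, hp0, hpp⟩ := ih (hB.inter (isHerSub_annHull d))
      ⟨d, ⟨hdB, self_mem_annHull hd.isSelfAdjoint⟩, hd0⟩
    have hdc : d * c = 0 := by
      simpa [hc.isSelfAdjoint.star_eq, hd.isSelfAdjoint.star_eq] using congrArg star hcd
    refine ⟨Fin.cons p₀ p, Fin.cases hp₀B fun i => (hpB i).1, Fin.cases hp₀ hp,
      Fin.cases hp₀0 hp0, ?_⟩
    intro i j hij
    cases i using Fin.cases <;> cases j using Fin.cases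
    · exact absurd rfl hij
    · exact mul_eq_zero_of_mem_annHull hd.isSelfAdjoint hcd hp₀c (hpB _).2
    · exact mul_eq_zero_of_mem_annHull hc.isSelfAdjoint hdc (hpB _).2 hp₀c
    · exact hpp fun h => hij (congrArg Fin.succ h)

lemma exists_mem_annHull_mul_conj_eq_self {b : A} (hb : 0 ≤ b) (hb0 : b ≠ 0) :
    ∃ p h : A, IsSelfAdjoint p ∧ p ≠ 0 ∧ p ∈ annHull b ∧ p * (star h * b * h) = p := by
  have : Nontrivial A := ⟨⟨b, 0, hb0⟩⟩
  set δ := ‖b‖ / 2 with hδ_def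
  have hδ : 0 < δ := half_pos (norm_pos_iff.mpr hb0)
  let g : ℝ → ℝ := fun t => max (t - δ) 0
  have hg : Continuous g := by fun_prop
  let k : ℝ → ℝ := fun t => (Real.sqrt (max t δ))⁻¹
  have hk : Continuous k :=
    Continuous.inv₀ (by fun_prop) fun t => (Real.sqrt_pos.2 (lt_max_of_lt_right hδ)).ne'
  have hkk (t : ℝ) : g t * t * (k t * t * k t) = g t * t := by
    rcases le_or_gt t δ with ht | ht
    · simp [g, max_eq_right (sub_nonpos.mpr ht)]
    · have hs : Real.sqrt t ≠ 0 := (Real.sqrt_pos.2 (hδ.trans ht)).ne'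
      have : k t * t * k t = 1 := by
        simp only [k, max_eq_left ht.le]
        field_simp
        exact (Real.sq_sqrt (hδ.trans ht).le).symm
      rw [this, mul_one]
  refine ⟨cfc (fun t => g t * t) b, cfc k b, cfc_predicate _ b, ?_, ?_, ?_⟩
  · intro h0
    have := eqOn_of_cfc_eq_cfc (h0.trans (cfc_zero ℝ b).symm) (hg.mul continuous_id).continuousOn
    have hpos : 0 < g ‖b‖ * ‖b‖ :=
      mul_pos (lt_max_of_lt_left (by linarith)) (norm_pos_iff.mpr hb0)
    exact hpos.ne' (this (CStarAlgebra.norm_mem_spectrum_of_nonneg hb))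
  · intro y hy
    have hpy : cfc (fun t => g t * t) b * y = 0 := by
      rw [cfc_mul g (fun t => t) b hg.continuousOn, cfc_id' ℝ b, mul_assoc, hy, mul_zero]
    exact ⟨hpy, by rwa [(cfc_predicate (fun t => g t * t) b : IsSelfAdjoint _).star_eq]⟩
  · rw [(cfc_predicate k b : IsSelfAdjoint _).star_eq]
    calc cfc (fun t => g t * t) b * (cfc k b * b * cfc k b)
        = cfc (fun t => g t * t * (k t * t * k t)) b := by
          rw [cfc_mul (fun t => g t * t) (fun t => k t * t * k t) b
              (hg.mul continuous_id).continuousOn ((hk.mul continuous_id).mul hk).continuousOn,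
            cfc_mul (fun t => k t * t) k b (hk.mul continuous_id).continuousOn hk.continuousOn,
            cfc_mul k (fun t => t) b hk.continuousOn, cfc_id' ℝ b]
      _ = cfc (fun t => g t * t) b := by simp only [hkk]

theorem exists_subprojection_mvnEquiv (hsimple : IsSimpleCStarAlgebra A) (hSP : PropertySP A)
    {q r : A} (hq : IsProjectionElem q) (hr : IsProjectionElem r) (hq0 : q ≠ 0) (hr0 : r ≠ 0) :
    ∃ f v : A, IsProjectionElem f ∧ f ≠ 0 ∧ r * f = f ∧ star v * v = f ∧ q * v = v := by
  obtain ⟨a, hx0⟩ := hsimple.exists_mul_mul_ne_zero hq0 hr0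
  set x := q * a * r with hx
  obtain ⟨p, h, hp, hp0, hpb, hph⟩ := exists_mem_annHull_mul_conj_eq_self
    (star_mul_self_nonneg x) ((CStarRing.star_mul_self_ne_zero_iff x).mpr hx0)
  obtain ⟨f, hfp, hf, hf0⟩ := hSP _ (isHerSub_annHull p) ⟨p, self_mem_annHull hp, hp0⟩
  have hfr : f * r = f :=
    mul_eq_of_mem_annHull (by rw [mul_assoc, hx, mul_assoc (q * a), hr.2]) (annHull_subset hpb hfp)
  refine ⟨f, x * h * f, hf, hf0, (hr.isSelfAdjoint.mul_eq_self_comm hf.isSelfAdjoint).mpr hfr,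
    ?_, by rw [hx, ← mul_assoc, ← mul_assoc, ← mul_assoc, ← mul_assoc, hq.2]⟩
  calc star (x * h * f) * (x * h * f) = f * (star h * (star x * x) * h) * f := by
        simp only [star_mul, hf.1]; noncomm_ring
    _ = f := by rw [mul_eq_of_mem_annHull hph hfp, hf.2]

theorem exists_projection_equiv_subprojections (hsimple : IsSimpleCStarAlgebra A)
    (hSP : PropertySP A) {n : ℕ} (q : Fin n → A) (hq : ∀ i, IsProjectionElem (q i))
    (hq0 : ∀ i, q i ≠ 0) :
    ∃ f : A, IsProjectionElem f ∧ f ≠ 0 ∧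
      ∃ w : Fin n → A, ∀ i, star (w i) * w i = f ∧ q i * w i = w i := by
  induction n with
  | zero =>
    obtain ⟨a, ha⟩ := hsimple.1
    have : Nontrivial A := ⟨⟨a, 0, ha⟩⟩
    exact ⟨1, ⟨star_one A, mul_one 1⟩, one_ne_zero, Fin.elim0, finZeroElim⟩
  | succ n ih =>
    obtain ⟨f, hf, hf0, w, hw⟩ := ih (fun i => q i.succ) (fun i => hq _) (fun i => hq0 _)
    obtain ⟨g, v, hg, hg0, hfg, hv, hqv⟩ :=
      exists_subprojection_mvnEquiv hsimple hSP (hq 0) hf (hq0 0) hf0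
    have hgf : g * f = g := (hf.isSelfAdjoint.mul_eq_self_comm hg.isSelfAdjoint).mp hfg
    refine ⟨g, hg, hg0, Fin.cons v fun i => w i * g,
      Fin.cases ⟨hv, hqv⟩ fun i => ⟨?_, ?_⟩⟩
    · calc star (w i * g) * (w i * g) = star g * (star (w i) * w i) * g := by
            rw [star_mul]; noncomm_ring
        _ = g := by rw [(hw i).1, hg.1, hgf, hg.2]
    · exact (mul_assoc _ _ _).symm.trans (congrArg (· * g) (hw i).2)

end Order

/-- In an infinite dimensional simple unital C*-algebra with Property (SP), every
nonzero hereditary subalgebra contains `n` nonzero mutually orthogonal, mutually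
Murray-von Neumann equivalent projections. -/
theorem exists_orthogonal_equiv_projections (A : Type*) [CStarAlgebra A]
    (hinfdim : ¬ FiniteDimensional ℂ A)
    (hsimple : IsSimpleCStarAlgebra A) (hSP : PropertySP A)
    (B : Set A) (hB : IsHerSub B) (hBne : ∃ b ∈ B, b ≠ 0) (n : ℕ) :
    ∃ p : Fin n → A, (∀ i, p i ∈ B) ∧ (∀ i, IsProjectionElem (p i)) ∧ (∀ i, p i ≠ 0) ∧
      (∀ i j, i ≠ j → p i * p j = 0) ∧ (∀ i j, MvNEquiv (p i) (p j)) := by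
  let : PartialOrder A := CStarAlgebra.spectralOrder A
  let : StarOrderedRing A := CStarAlgebra.spectralOrderedRing A
  obtain ⟨q, hqB, hq, hq0, hqq⟩ := exists_orthogonal_projections hinfdim hsimple hSP n hB hBne
  obtain ⟨f, hf, hf0, w, hw⟩ := exists_projection_equiv_subprojections hsimple hSP q hq hq0
  have hwf (i : Fin n) : w i * f = w i := by
    have := mul_star_mul_self_of_isProjectionElem (w := w i) (by rwa [(hw i).1])
    rwa [(hw i).1] at this
  have hp (i : Fin n) : IsProjectionElem (w i * star (w i)) :=
    isProjectionElem_mul_star (hw i).1 (hwf i)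
  have hqp (i : Fin n) : q i * (w i * star (w i)) = w i * star (w i) := by
    rw [← mul_assoc, (hw i).2]
  refine ⟨fun i => w i * star (w i), fun i => hB.mem_of_mul_eq (hqB i) (hq i)
    (mul_star_self_nonneg _) (hqp i), hp, fun i h => hf0 ?_, fun i j hij => ?_,
    fun i j => mvnEquiv_mul_star (hw i).1 (hw j).1 (hwf i) (hwf j)⟩
  · rw [← (hw i).1, (CStarRing.mul_star_self_eq_zero_iff _).mp h, star_zero, zero_mul]
  · have hpq : w i * star (w i) * q i = w i * star (w i) :=
      ((hq i).isSelfAdjoint.mul_eq_self_comm (hp i).isSelfAdjoint).mp (hqp i)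
    show w i * star (w i) * (w j * star (w j)) = 0
    rw [← hpq, ← hqp j, mul_assoc, ← mul_assoc (q i), hqq hij, zero_mul, mul_zero]
end
end

section
/- Let A be an infinite dimensional simple separable unital C*-algebra, and let α : G → Aut(A) be an action of a finite group G with the tracial Rokhlin property. Then α_g is an outer automorphism for every g ∈ G with g ≠ 1. -/
open Matrix
open scoped ComplexOrder

noncomputable section

section Rokhlin

variable {G : Type*} [Group G] [Fintype G] {A : Type*} [CStarAlgebra A]
  [PartialOrder A] [StarOrderedRing A]

/-- The tracial Rokhlin property for an action of a finite group `G`. -/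
def TracialRokhlin (α : G → A ≃⋆ₐ[ℂ] A) : Prop :=
  ∀ (F : Finset A) (ε : ℝ), 0 < ε → ∀ x : A, 0 ≤ x → ‖x‖ = 1 →
    ∃ e : G → A, (∀ g, IsProjectionElem (e g)) ∧
      (∀ g h, g ≠ h → e g * e h = 0) ∧
      (∀ g h, ‖α g (e h) - e (g * h)‖ < ε) ∧
      (∀ g, ∀ a ∈ F, ‖e g * a - a * e g‖ < ε) ∧
      MvNInHer (1 - ∑ g : G, e g) x ∧
      1 - ε < ‖(∑ g : G, e g) * x * (∑ g : G, e g)‖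

/-- The strict Rokhlin property for an action of a finite group `G`. -/
def StrictRokhlin (α : G → A ≃⋆ₐ[ℂ] A) : Prop :=
  ∀ (F : Finset A) (ε : ℝ), 0 < ε →
    ∃ e : G → A, (∀ g, IsProjectionElem (e g)) ∧
      (∀ g h, g ≠ h → e g * e h = 0) ∧
      (∀ g h, ‖α g (e h) - e (g * h)‖ < ε) ∧
      (∀ g, ∀ a ∈ F, ‖e g * a - a * e g‖ < ε) ∧
      (∑ g : G, e g) = 1

end Rokhlin

/-- An action of a finite group with the tracial Rokhlin property on an infinite
dimensional simple separable unital C*-algebra is pointwise outer. -/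
theorem tracialRokhlin_implies_outer (A : Type*) [CStarAlgebra A]
    [PartialOrder A] [StarOrderedRing A] [TopologicalSpace.SeparableSpace A]
    (hinfdim : ¬ FiniteDimensional ℂ A) (hsimple : IsSimpleCStarAlgebra A)
    (G : Type*) [Group G] [Fintype G]
    (α : G → A ≃⋆ₐ[ℂ] A) (hα : ∀ g h : G, ∀ a : A, α (g * h) a = α g (α h a))
    (hTR : TracialRokhlin α) :
    ∀ g : G, g ≠ 1 → ¬ ∃ u ∈ unitary A, ∀ a : A, α g a = u * a * star u := by
  intro g hg
  rintro ⟨u, hu, hAd⟩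
  have hA : Nontrivial A := by
    by_contra h
    rw [not_nontrivial_iff_subsingleton] at h
    haveI := h
    exact hinfdim inferInstance
  obtain ⟨e, hproj, horth, hcα, hF, -, hnorm⟩ :=
    hTR {u} (1/4) (by norm_num) 1 zero_le_one norm_one
  -- there is h with e h ≠ 0
  have hsum : (∑ k : G, e k) ≠ 0 := by
    intro h0
    rw [h0] at hnorm
    simp at hnorm
    linarith
  obtain ⟨h, -, hh⟩ := Finset.exists_ne_zero_of_sum_ne_zero hsum
  -- norms of unitary and projection
  have hnu : ‖u‖ = 1 := by
    have := hu.1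
    have h1 : ‖star u * u‖ = 1 := by rw [this]; exact norm_one
    rw [CStarRing.norm_star_mul_self] at h1
    nlinarith [norm_nonneg u]
  have hnsu : ‖star u‖ = 1 := by rw [norm_star]; exact hnu
  have heh : ‖e h‖ = 1 := by
    have hsq : ‖e h‖ * ‖e h‖ = ‖e h‖ := by
      have := CStarRing.norm_star_mul_self (x := e h)
      rw [(hproj h).1, (hproj h).2] at this
      linarith
    have hpos : 0 < ‖e h‖ := norm_pos_iff.mpr hh
    nlinarith
  -- e h ≈ u e h u*
  have hcomm : ‖e h * u - u * e h‖ < 1/4 := hF h u (Finset.mem_singleton_self u)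
  have h1 : ‖u * e h * star u - e h‖ < 1/4 := by
    have key : u * e h * star u - e h = (u * e h - e h * u) * star u := by
      rw [sub_mul, mul_assoc (e h) u, hu.2, mul_one]
    rw [key]
    calc ‖(u * e h - e h * u) * star u‖ ≤ ‖u * e h - e h * u‖ * ‖star u‖ :=
          norm_mul_le _ _
      _ = ‖e h * u - u * e h‖ := by rw [hnsu, mul_one, ← norm_neg, neg_sub]
      _ < 1/4 := hcomm
  have h2 : ‖α g (e h) - e (g * h)‖ < 1/4 := hcα g h
  rw [hAd (e h)] at h2
  have h3 : ‖e h - e (g * h)‖ < 1/2 := by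
    have key3 : e h - e (g * h) =
        -(u * e h * star u - e h) + (u * e h * star u - e (g * h)) := by abel
    rw [key3]
    calc ‖-(u * e h * star u - e h) + (u * e h * star u - e (g * h))‖
        ≤ ‖-(u * e h * star u - e h)‖ + ‖u * e h * star u - e (g * h)‖ := norm_add_le _ _
      _ = ‖u * e h * star u - e h‖ + ‖u * e h * star u - e (g * h)‖ := by rw [norm_neg]
      _ < 1/4 + 1/4 := by linarith
      _ = 1/2 := by norm_num
  -- orthogonality
  have hne : h ≠ g * h := by
    intro heq
    apply hg
    have : g * h = 1 * h := by rw [one_mul, ← heq]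
    exact mul_right_cancel this
  have horth' : e h * e (g * h) = 0 := horth h (g * h) hne
  -- e h = e h * (e h - e (g*h)) * e h
  have hfact : e h = e h * (e h - e (g * h)) * e h := by
    rw [mul_sub, sub_mul, (hproj h).2, horth', zero_mul, sub_zero, (hproj h).2]
  have : ‖e h‖ ≤ ‖e h‖ * ‖e h - e (g * h)‖ * ‖e h‖ := by
    conv_lhs => rw [hfact]
    calc ‖e h * (e h - e (g * h)) * e h‖ ≤ ‖e h * (e h - e (g * h))‖ * ‖e h‖ :=
          norm_mul_le _ _
      _ ≤ ‖e h‖ * ‖e h - e (g * h)‖ * ‖e h‖ := by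
          gcongr; exact norm_mul_le _ _
  rw [heh] at this
  linarith
end
end

section
/- Let A be an infinite dimensional simple separable unital C*-algebra, and let α : G → Aut(A) be an action of a finite group G with the tracial Rokhlin property. Then either A has Property (SP) or α has the strict Rokhlin property. -/
open Matrix
open scoped ComplexOrder

noncomputable section

/-!
If `A` fails Property (SP), some nonzero hereditary subalgebra `B` has no nonzero projection.
Any positive norm-one `x ∈ B` generates a hereditary subalgebra inside `B`, so the tracial
Rokhlin property applied to `x` makes the defect `1 - ∑ e g` Murray-von Neumann equivalent to
the zero projection. Hence `∑ e g = 1`: the towers are already strict Rokhlin towers.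
-/

namespace IsHerSub

section

variable {A : Type*} [NonUnitalNonAssocRing A] [Star A] [SMul ℂ A] [TopologicalSpace A]
  {B : Set A} {a b : A}

lemma add_mem (hB : IsHerSub B) (ha : a ∈ B) (hb : b ∈ B) : a + b ∈ B := hB.2.2.1 a ha b hb

lemma mul_mem (hB : IsHerSub B) (ha : a ∈ B) (hb : b ∈ B) : a * b ∈ B := hB.2.2.2.1 a ha b hb

lemma smul_mem (hB : IsHerSub B) (c : ℂ) (ha : a ∈ B) : c • a ∈ B := hB.2.2.2.2.1 c a ha

lemma star_mem (hB : IsHerSub B) (ha : a ∈ B) : star a ∈ B := hB.2.2.2.2.2.1 a ha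

end

lemma sub_mem {A : Type*} [NonUnitalNonAssocRing A] [Module ℂ A] [Star A] [TopologicalSpace A]
    {B : Set A} (hB : IsHerSub B) {a b : A} (ha : a ∈ B) (hb : b ∈ B) : a - b ∈ B := by
  simpa [sub_eq_add_neg] using hB.add_mem ha (hB.smul_mem (-1) hb)

variable {A : Type*} [CStarAlgebra A] [PartialOrder A] [StarOrderedRing A] {B : Set A}

lemma mem_of_nonneg_of_le (hB : IsHerSub B) {a b : A} (ha : 0 ≤ a) (hab : a ≤ b) (hb : b ∈ B) :
    a ∈ B :=
  hB.2.2.2.2.2.2 a b (CStarAlgebra.nonneg_iff_eq_star_mul_self.mp ha)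
    (CStarAlgebra.nonneg_iff_eq_star_mul_self.mp (sub_nonneg.mpr hab)) hb

lemma conj_mem_of_nonneg (hB : IsHerSub B) {x p : A} (hx : x ∈ B) (hx0 : 0 ≤ x) (hp : 0 ≤ p) :
    x * p * x ∈ B := by
  have hbound : x * p * x ≤ (‖p‖ : ℂ) • (x * x) := by
    calc x * p * x ≤ x * algebraMap ℝ A ‖p‖ * x :=
          conjugate_le_conjugate_of_nonneg (IsSelfAdjoint.of_nonneg hp).le_algebraMap_norm_self hx0
      _ = (‖p‖ : ℂ) • (x * x) := by
          rw [Algebra.algebraMap_eq_smul_one, mul_smul_comm, smul_mul_assoc, mul_one,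
            Complex.coe_smul]
  exact hB.mem_of_nonneg_of_le (conjugate_nonneg_of_nonneg hp hx0) hbound
    (hB.smul_mem _ (hB.mul_mem hx hx))

lemma conj_mem_of_isSelfAdjoint (hB : IsHerSub B) {x s : A} (hx : x ∈ B) (hx0 : 0 ≤ x)
    (hs : IsSelfAdjoint s) : x * s * x ∈ B := by
  rw [← CFC.posPart_sub_negPart s, mul_sub, sub_mul]
  exact hB.sub_mem (hB.conj_mem_of_nonneg hx hx0 (CFC.posPart_nonneg s))
    (hB.conj_mem_of_nonneg hx hx0 (CFC.negPart_nonneg s))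

lemma conj_mem (hB : IsHerSub B) {x : A} (hx : x ∈ B) (hx0 : 0 ≤ x) (a : A) : x * a * x ∈ B := by
  rw [← realPart_add_I_smul_imaginaryPart a, mul_add, add_mul, mul_smul_comm, smul_mul_assoc]
  exact hB.add_mem (hB.conj_mem_of_isSelfAdjoint hx hx0 (realPart a).2)
    (hB.smul_mem _ (hB.conj_mem_of_isSelfAdjoint hx hx0 (imaginaryPart a).2))

lemma herSub_subset (hB : IsHerSub B) {x : A} (hx : x ∈ B) (hx0 : 0 ≤ x) : herSub x ⊆ B :=
  closure_minimal (by rintro _ ⟨a, rfl⟩; exact hB.conj_mem hx hx0 a) hB.1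

lemma exists_nonneg_norm_eq_one (hB : IsHerSub B) {b : A} (hb : b ∈ B) (hb0 : b ≠ 0) :
    ∃ x ∈ B, 0 ≤ x ∧ ‖x‖ = 1 := by
  set c : A := (‖b‖⁻¹ : ℂ) • b
  have hc : c ∈ B := hB.smul_mem _ hb
  refine ⟨star c * c, hB.mul_mem (hB.star_mem hc) hc, star_mul_self_nonneg c, ?_⟩
  rw [CStarRing.norm_star_mul_self, norm_smul, norm_inv, Complex.norm_real, norm_norm,
    inv_mul_cancel₀ (norm_ne_zero_iff.mpr hb0), one_mul]

end IsHerSub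

lemma eq_zero_of_mvnEquiv_zero {A : Type*} [NonUnitalNormedRing A] [StarRing A] [CStarRing A]
    {p : A} (h : MvNEquiv p 0) : p = 0 := by
  obtain ⟨v, rfl, hv⟩ := h
  rw [CStarRing.star_mul_self_eq_zero_iff, ← CStarRing.mul_star_self_eq_zero_iff, hv]

lemma exists_projectionless_herSub_of_not_propertySP {A : Type*} [CStarAlgebra A]
    [PartialOrder A] [StarOrderedRing A] (hSP : ¬ PropertySP A) :
    ∃ x : A, 0 ≤ x ∧ ‖x‖ = 1 ∧ ∀ q ∈ herSub x, IsProjectionElem q → q = 0 := by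
  simp only [PropertySP, not_forall, not_exists, not_and, not_not] at hSP
  obtain ⟨B, hB, ⟨b, hb, hb0⟩, hnoproj⟩ := hSP
  obtain ⟨x, hx, hx0, hx1⟩ := hB.exists_nonneg_norm_eq_one hb hb0
  exact ⟨x, hx0, hx1, fun q hq => hnoproj q (hB.herSub_subset hx hx0 hq)⟩

lemma TracialRokhlin.strictRokhlin {G : Type*} [Group G] [Fintype G] {A : Type*}
    [CStarAlgebra A] [PartialOrder A] {α : G → A ≃⋆ₐ[ℂ] A}
    (hTR : TracialRokhlin α) {x : A} (hx0 : 0 ≤ x) (hx1 : ‖x‖ = 1)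
    (hx : ∀ q ∈ herSub x, IsProjectionElem q → q = 0) : StrictRokhlin α := by
  intro F ε hε
  obtain ⟨e, hproj, horth, hequiv, hcomm, ⟨q, hq, hqx, hpq⟩, -⟩ := hTR F ε hε x hx0 hx1
  rw [hx q hqx hq] at hpq
  exact ⟨e, hproj, horth, hequiv, hcomm, (sub_eq_zero.mp (eq_zero_of_mvnEquiv_zero hpq)).symm⟩

theorem propertySP_or_strictRokhlin_general (A : Type*) [CStarAlgebra A]
    [PartialOrder A] [StarOrderedRing A]
    (G : Type*) [Group G] [Fintype G]
    (α : G → A ≃⋆ₐ[ℂ] A)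
    (hTR : TracialRokhlin α) :
    PropertySP A ∨ StrictRokhlin α := by
  refine or_iff_not_imp_left.mpr fun hSP => ?_
  obtain ⟨x, hx0, hx1, hx⟩ := exists_projectionless_herSub_of_not_propertySP hSP
  exact hTR.strictRokhlin hx0 hx1 hx

/-- If a finite group action on an infinite dimensional simple separable unital
C*-algebra has the tracial Rokhlin property, then either the algebra has
Property (SP) or the action has the strict Rokhlin property. -/
theorem propertySP_or_strictRokhlin (A : Type*) [CStarAlgebra A]
    [PartialOrder A] [StarOrderedRing A] [TopologicalSpace.SeparableSpace A]
    (hinfdim : ¬ FiniteDimensional ℂ A) (hsimple : IsSimpleCStarAlgebra A)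
    (G : Type*) [Group G] [Fintype G]
    (α : G → A ≃⋆ₐ[ℂ] A) (hα : ∀ g h : G, ∀ a : A, α (g * h) a = α g (α h a))
    (hTR : TracialRokhlin α) :
    PropertySP A ∨ StrictRokhlin α :=
  propertySP_or_strictRokhlin_general A G α hTR
end
end

section
/- Let A be an infinite dimensional simple separable unital C*-algebra and let α ∈ Aut(A) be tracially approximately inner. If A does not have Property (SP), then α is approximately inner. -/
open Matrix
open scoped ComplexOrder

noncomputable section

section TAI

variable {A : Type*} [CStarAlgebra A] [PartialOrder A] [StarOrderedRing A]

/-- A tracially approximately inner automorphism. -/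
def TraciallyApproxInner (α : A ≃⋆ₐ[ℂ] A) : Prop :=
  ∀ (F : Finset A) (ε : ℝ), 0 < ε → ∀ x : A, 0 ≤ x → ‖x‖ = 1 →
    ∃ p₁ p₂ v : A, IsProjectionElem p₁ ∧ IsProjectionElem p₂ ∧
      star v * v = p₁ ∧ v * star v = α p₂ ∧
      (∀ a ∈ F, ‖p₁ * a - a * p₁‖ < ε ∧ ‖p₂ * a - a * p₂‖ < ε) ∧
      (∀ a ∈ F, ‖v * (p₁ * a * p₁) * star v - α (p₂ * a * p₂)‖ < ε) ∧
      MvNInHer (1 - p₁) x ∧ MvNInHer (1 - p₂) x ∧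
      1 - ε < ‖p₁ * x * p₁‖ ∧ 1 - ε < ‖p₂ * x * p₂‖

/-- An approximately inner automorphism. -/
def ApproxInner (α : A ≃⋆ₐ[ℂ] A) : Prop :=
  ∀ (F : Finset A) (ε : ℝ), 0 < ε →
    ∃ u ∈ unitary A, ∀ a ∈ F, ‖u * a * star u - α a‖ < ε

end TAI

section Aux

variable {A : Type*} [CStarAlgebra A] [PartialOrder A] [StarOrderedRing A]

/-- For a positive element `d`, `x * d * x` is a `star z * z`. -/
lemma aux_star_form {x : A} (hx : IsSelfAdjoint x) {d : A} (hd : 0 ≤ d) :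
    ∃ z : A, x * d * x = star z * z := by
  refine ⟨CFC.sqrt d * x, ?_⟩
  have hs : IsSelfAdjoint (CFC.sqrt d) :=
    (CFC.sqrt_nonneg (a := d)).isSelfAdjoint
  rw [StarMul.star_mul, hs.star_eq, hx.star_eq]
  calc x * d * x = x * (CFC.sqrt d * CFC.sqrt d) * x := by rw [CFC.sqrt_mul_sqrt_self d]
    _ = x * CFC.sqrt d * (CFC.sqrt d * x) := by noncomm_ring

/-- The hereditary subalgebra generated by a positive element of a hereditary
subalgebra `B` is contained in `B`. -/
lemma herSub_subset_of_mem_s14 {B : Set A} (hB : IsHerSub B) {x : A} (hx : 0 ≤ x)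
    (hxB : x ∈ B) : herSub x ⊆ B := by
  obtain ⟨hclosed, h0B, haddB, hmulB, hsmulB, hstarB, hherB⟩ := hB
  have hxs : IsSelfAdjoint x := hx.isSelfAdjoint
  -- positive middle element
  have key : ∀ c : A, 0 ≤ c → x * c * x ∈ B := by
    intro c hc
    refine hherB _ ((‖c‖ : ℂ) • (x * x)) (aux_star_form hxs hc) ?_
      (hsmulB _ _ (hmulB x hxB x hxB))
    have hnn : (0 : A) ≤ algebraMap ℝ A ‖c‖ - c :=
      sub_nonneg.mpr hc.isSelfAdjoint.le_algebraMap_norm_self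
    have hrw : (‖c‖ : ℂ) • (x * x) - x * c * x = x * (algebraMap ℝ A ‖c‖ - c) * x := by
      rw [Complex.coe_smul, Algebra.algebraMap_eq_smul_one]
      rw [mul_sub, sub_mul]
      congr 1
      rw [mul_smul_comm, smul_mul_assoc, mul_one]
    rw [hrw]
    exact aux_star_form hxs hnn
  -- selfadjoint middle element
  have keySA : ∀ c : A, IsSelfAdjoint c → x * c * x ∈ B := by
    intro c hc
    have hdecomp : c = c⁺ - c⁻ := (CFC.posPart_sub_negPart c).symm
    have hrw : x * c * x = x * c⁺ * x + (-1 : ℂ) • (x * c⁻ * x) := by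
      rw [neg_one_smul]
      nth_rewrite 1 [hdecomp]
      noncomm_ring
    rw [hrw]
    exact haddB _ (key _ (CFC.posPart_nonneg c)) _
      (hsmulB _ _ (key _ (CFC.negPart_nonneg c)))
  -- arbitrary middle element
  have keyAll : ∀ c : A, x * c * x ∈ B := by
    intro c
    have hdecomp : ((realPart c : A)) + Complex.I • ((imaginaryPart c : A)) = c :=
      realPart_add_I_smul_imaginaryPart c
    have hrw : x * c * x
        = x * (realPart c : A) * x + Complex.I • (x * (imaginaryPart c : A) * x) := by
      nth_rewrite 1 [← hdecomp]
      rw [mul_add, add_mul, mul_smul_comm, smul_mul_assoc]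
    rw [hrw]
    exact haddB _ (keySA _ (realPart c).2) _ (hsmulB _ _ (keySA _ (imaginaryPart c).2))
  refine hclosed.closure_subset_iff.mpr ?_
  rintro y ⟨a, rfl⟩
  exact keyAll a

/-- A projection MvN-equivalent to `0` is `0`, so `1 - p` equivalent to a zero
projection forces `p = 1`. -/
lemma aux_eq_one_of_equiv_zero {p : A} (h : MvNEquiv (1 - p) 0) : p = 1 := by
  obtain ⟨w, hw1, hw2⟩ := h
  have hw0 : w = 0 := by
    have hn : ‖w‖ * ‖w‖ = 0 := by
      rw [← CStarRing.norm_self_mul_star, hw2, norm_zero]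
    have : ‖w‖ = 0 := by nlinarith [norm_nonneg w]
    exact norm_eq_zero.mp this
  rw [hw0] at hw1
  simp only [star_zero, mul_zero, zero_mul] at hw1
  have h : (1 : A) - p = 0 := hw1.symm
  rw [sub_eq_zero] at h
  exact h.symm

end Aux

/-- A tracially approximately inner automorphism of an algebra without
Property (SP) is approximately inner. -/
theorem traciallyApproxInner_of_not_SP (A : Type*) [CStarAlgebra A]
    [PartialOrder A] [StarOrderedRing A] [TopologicalSpace.SeparableSpace A]
    (hinfdim : ¬ FiniteDimensional ℂ A) (hsimple : IsSimpleCStarAlgebra A)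
    (α : A ≃⋆ₐ[ℂ] A) (hα : TraciallyApproxInner α) (hSP : ¬ PropertySP A) :
    ApproxInner α := by
  -- Extract a hereditary subalgebra with no nonzero projections.
  rw [PropertySP] at hSP
  push_neg at hSP
  obtain ⟨B, hB, ⟨b, hbB, hb0⟩, hnp⟩ := hSP
  obtain ⟨hclosed, h0B, haddB, hmulB, hsmulB, hstarB, hherB⟩ := id hB
  -- Build a positive norm-one element `x ∈ B`.
  set a0 : A := star b * b with ha0def
  have ha0B : a0 ∈ B := hmulB _ (hstarB _ hbB) _ hbB
  have ha0norm : ‖a0‖ = ‖b‖ * ‖b‖ := CStarRing.norm_star_mul_self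
  have ha0pos : (0 : ℝ) < ‖a0‖ := by
    rw [ha0norm]
    have : 0 < ‖b‖ := norm_pos_iff.mpr hb0
    positivity
  set r : ℝ := ‖a0‖⁻¹ with hrdef
  set x : A := (r : ℂ) • a0 with hxdef
  have hxB : x ∈ B := hsmulB _ _ ha0B
  have hxform : x = star ((↑(Real.sqrt r) : ℂ) • b) * ((↑(Real.sqrt r) : ℂ) • b) := by
    rw [star_smul, smul_mul_assoc, mul_smul_comm, smul_smul, hxdef, ha0def]
    congr 1
    rw [Complex.star_def, Complex.conj_ofReal, ← Complex.ofReal_mul,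
      Real.mul_self_sqrt (by positivity)]
  have hxnn : (0 : A) ≤ x := hxform ▸ star_mul_self_nonneg _
  have hxnorm : ‖x‖ = 1 := by
    rw [hxdef, norm_smul, Complex.norm_real, Real.norm_eq_abs, hrdef,
      abs_of_pos (by positivity)]
    field_simp
  -- Apply tracial approximate innerness.
  intro F ε hε
  obtain ⟨p₁, p₂, v, hp₁, hp₂, hv1, hv2, hcomm, hint, hher₁, hher₂, hn₁, hn₂⟩ :=
    hα F ε hε x hxnn hxnorm
  have hsub : herSub x ⊆ B := herSub_subset_of_mem_s14 hB hxnn hxB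
  -- Projections in `herSub x` are zero, hence `p₁ = p₂ = 1`.
  have hone : ∀ p : A, MvNInHer (1 - p) x → p = 1 := by
    rintro p ⟨q, hqproj, hqher, hqequiv⟩
    have hq0 : q = 0 := hnp q (hsub hqher) hqproj
    exact aux_eq_one_of_equiv_zero (hq0 ▸ hqequiv)
  have hp₁1 : p₁ = 1 := hone p₁ hher₁
  have hp₂1 : p₂ = 1 := hone p₂ hher₂
  subst hp₁1 hp₂1
  rw [_root_.map_one] at hv2
  refine ⟨v, Unitary.mem_iff.mpr ⟨hv1, hv2⟩, fun a ha => ?_⟩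
  have := hint a ha
  simpa using this
end
end
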